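/- arXiv:0802.2090 — 3 statements merged into one kernel-verified Lean document; each statement's English description precedes it below -/
import Mathlib

section
/- Positive definiteness of the energy current contracted with hyperbolic covectors: Fix a background state Ṽ ∈ ℝ¹⁰ with P̃ > 0 (hence, by the equation-of-state assumptions, Q̃ > 0 and R̃ + P̃ > 0 and 0 < σ̃ < 1). For a covector ξ ∈ ℝ⁴ and variation V̇ ∈ ℝ¹⁰, let ξ_μ J̇^μ(V̇,V̇) denote the quadratic form obtained by contracting ξ with the energy current of V̇ with coefficients defined by Ṽ. If ξ satisfies ξ_μ ξ^μ < 0 and ξ₀ > 0 (i.e., ξ belongs to the positive component of the inner characteristic core), then ξ_μ J̇^μ(V̇,V̇) > 0 for every nonzero V̇ ∈ ℝ¹⁰. -/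
noncomputable section
open MeasureTheory Real Set Filter Metric

namespace EN

/-- Space: `ℝ³`. -/
abbrev Sp : Type := Fin 3 → ℝ
/-- Spacetime: `ℝ^{1+3}`. -/
abbrev Spt : Type := Fin 4 → ℝ
/-- State space: `ℝ¹⁰`, components `(S, P, U¹, U², U³, φ, ψ₀, ψ₁, ψ₂, ψ₃)`. -/
abbrev St : Type := Fin 10 → ℝ

/-- The spacetime point with time `t` and spatial part `s`. -/
def st (t : ℝ) (s : Sp) : Spt := Fin.cons t s

/-- The spatial part of a spacetime point. -/
def sp (x : Spt) : Sp := fun k => x k.succ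

/-- Standard basis of spacetime. -/
def e4 (μ : Fin 4) : Spt := fun ν => if ν = μ then 1 else 0

/-- Standard basis of space. -/
def e3 (k : Fin 3) : Sp := fun j => if j = k then 1 else 0

/-- The partial derivative `∂_μ f` of a scalar function on spacetime. -/
def pd (μ : Fin 4) (f : Spt → ℝ) (x : Spt) : ℝ := fderiv ℝ f x (e4 μ)

/-- Iterated spatial partial derivative `∂_α` along a list of spatial directions. -/
def pdIter : List (Fin 3) → (Spt → ℝ) → Spt → ℝ
  | [], f => f
  | k :: l, f => pd k.succ (pdIter l f)

/-- Entropy component. -/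
def Sc (V : St) : ℝ := V 0
/-- Pressure component. -/
def Pc (V : St) : ℝ := V 1
/-- Spatial velocity components `U^k`, `k = 1,2,3`. -/
def Uc (V : St) (k : Fin 3) : ℝ := V ⟨2 + k.val, by have := k.isLt; omega⟩
/-- Nordström potential component `φ`. -/
def Phic (V : St) : ℝ := V 5
/-- Components `ψ_μ`, `μ = 0,…,3`. -/
def Psic (V : St) (μ : Fin 4) : ℝ := V ⟨6 + μ.val, by have := μ.isLt; omega⟩

/-- `U⁰ = (1 + U^k U_k)^{1/2}`. -/
def U0 (V : St) : ℝ := Real.sqrt (1 + ∑ k : Fin 3, (Uc V k) ^ 2)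

/-- The four-velocity `(U⁰, U¹, U², U³)`. -/
def U4 (V : St) : Fin 4 → ℝ := Fin.cons (U0 V) (Uc V)

/-- The inverse Minkowski metric `g^{μν} = diag(-1,1,1,1)`. -/
def gInv (μ ν : Fin 4) : ℝ := if μ = ν then (if μ = 0 then -1 else 1) else 0

/-- `R = e^{4φ} ℛ(S, e^{-4φ} P)`. -/
def Rq (R : ℝ → ℝ → ℝ) (V : St) : ℝ :=
  exp (4 * Phic V) * R (Sc V) (exp (-(4 * Phic V)) * Pc V)

/-- sound speed `σ = 𝒮(S, e^{-4φ}P)`. -/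
def sigq (S : ℝ → ℝ → ℝ) (V : St) : ℝ := S (Sc V) (exp (-(4 * Phic V)) * Pc V)

/-- `Q = 𝒮²(S, e^{-4φ}P)(R + P)`. -/
def Qq (R S : ℝ → ℝ → ℝ) (V : St) : ℝ := (sigq S V) ^ 2 * (Rq R V + Pc V)

/-- `Π^{μν} = U^μ U^ν + g^{μν}`. -/
def Piq (V : St) (μ ν : Fin 4) : ℝ := U4 V μ * U4 V ν + gInv μ ν

/-- Equation-of-state assumptions: `ℛ, 𝒮` smooth, `ℛ > 0`, `0 < 𝒮 < 1`. -/
def GoodEOS (R S : ℝ → ℝ → ℝ) : Prop :=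
  ContDiff ℝ (⊤ : ℕ∞) (fun p : ℝ × ℝ => R p.1 p.2) ∧
  ContDiff ℝ (⊤ : ℕ∞) (fun p : ℝ × ℝ => S p.1 p.2) ∧
  (∀ a b, 0 < R a b) ∧ (∀ a b, 0 < S a b ∧ S a b < 1)

/-- The admissible subset of state space: `S > 0`, `P > 0`. -/
def adm : Set St := {V | 0 < Sc V ∧ 0 < Pc V}

/-- The spacetime slab `[0,T] × ℝ³`. -/
def slab (T : ℝ) : Set Spt := {x | x 0 ∈ Icc (0 : ℝ) T}

/-- The equations of variation (EOV) defined by the background `W`,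
with unknown `Vd` and inhomogeneous terms `(f, g, h, l0, lj, l4)`. -/
structure IsEOVSol (R S : ℝ → ℝ → ℝ) (W Vd : Spt → St)
    (f g : Spt → ℝ) (h : Spt → Fin 3 → ℝ)
    (l0 : Spt → ℝ) (lj : Spt → Fin 3 → ℝ) (l4 : Spt → ℝ) (D : Set Spt) : Prop where
  eS : ∀ x ∈ D, (∑ μ, U4 (W x) μ * pd μ (fun y => Sc (Vd y)) x) = f x
  eP : ∀ x ∈ D,
    (∑ μ, U4 (W x) μ * pd μ (fun y => Pc (Vd y)) x)
      + Qq R S (W x) * (∑ k : Fin 3, (Uc (W x) k / U0 (W x)) * pd 0 (fun y => Uc (Vd y) k) x)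
      + Qq R S (W x) * (∑ k : Fin 3, pd k.succ (fun y => Uc (Vd y) k) x) = g x
  eU : ∀ x ∈ D, ∀ j : Fin 3,
    (Rq R (W x) + Pc (W x)) * (∑ μ, U4 (W x) μ * pd μ (fun y => Uc (Vd y) j) x)
      + (∑ μ, Piq (W x) μ j.succ * pd μ (fun y => Pc (Vd y)) x) = h x j
  eL0 : ∀ x ∈ D,
    (- pd 0 (fun y => Psic (Vd y) 0) x)
      + (∑ j : Fin 3, pd j.succ (fun y => Psic (Vd y) j.succ) x) = l0 x
  eLj : ∀ x ∈ D, ∀ j : Fin 3,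
    pd 0 (fun y => Psic (Vd y) j.succ) x - pd j.succ (fun y => Psic (Vd y) 0) x = lj x j
  eL4 : ∀ x ∈ D, pd 0 (fun y => Phic (Vd y)) x = l4 x

/-- The linearization of the EN_κ system around the background `W`. -/
def IsLinSol (κ2 : ℝ) (R S : ℝ → ℝ → ℝ) (W Vd : Spt → St) (D : Set Spt) : Prop :=
  IsEOVSol R S W Vd
    (fun _ => 0)
    (fun x => (4 * Pc (W x) - 3 * Qq R S (W x)) * ∑ μ, U4 (W x) μ * Psic (W x) μ)
    (fun x j => (3 * Pc (W x) - Rq R (W x)) * ∑ μ, Piq (W x) μ j.succ * Psic (W x) μ)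
    (fun x => κ2 * Phic (W x) + Rq R (W x) - 3 * Pc (W x))
    (fun _ _ => 0)
    (fun x => Psic (W x) 0) D

/-- The EN_κ system: the linearization around the solution itself. -/
def IsENSol (κ2 : ℝ) (R S : ℝ → ℝ → ℝ) (V : Spt → St) (D : Set Spt) : Prop :=
  IsLinSol κ2 R S V V D

/-- Sobolev "norm" of order `N` of a function on `ℝ³`, restricted to a set `A`. -/
def SobNormOn (N : ℕ) {E : Type*} [NormedAddCommGroup E] [NormedSpace ℝ E]
    (f : Sp → E) (A : Set Sp) : ℝ :=
  ∑ i ∈ Finset.range (N + 1),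
    (eLpNorm (fun s => iteratedFDeriv ℝ i f s) 2 (volume.restrict A)).toReal

/-- Sobolev norm of order `N` on all of `ℝ³`. -/
def SobNorm (N : ℕ) {E : Type*} [NormedAddCommGroup E] [NormedSpace ℝ E] (f : Sp → E) : ℝ :=
  SobNormOn N f Set.univ

/-- Membership in `H^N(ℝ³)`. -/
def MemHN (N : ℕ) {E : Type*} [NormedAddCommGroup E] [NormedSpace ℝ E] (f : Sp → E) : Prop :=
  ∀ i ≤ N, MemLp (fun s => iteratedFDeriv ℝ i f s) 2 volume

/-- The constant background state `V̄ = (S̄, P̄, 0,0,0, φ̄, 0,0,0,0)`. -/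
def backV (Sb Pb phib : ℝ) : St := fun i =>
  if i = 0 then Sb else if i = 1 then Pb else if i = 5 then phib else 0

/-- The time derivative of `V`, restricted to the slice at time `t`. -/
def tderivSlice (V : Spt → St) (t : ℝ) (s : Sp) : St := fun i => pd 0 (fun y => V y i) (st t s)

/-- `F : [0,T] → H^N` is continuous. -/
def ContInHN (N : ℕ) (T : ℝ) {E : Type*} [NormedAddCommGroup E] [NormedSpace ℝ E]
    (F : ℝ → Sp → E) : Prop :=
  (∀ t ∈ Icc (0 : ℝ) T, MemHN N (F t)) ∧
  ∀ t₀ ∈ Icc (0 : ℝ) T,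
    Tendsto (fun t => SobNorm N (fun s => F t s - F t₀ s)) (nhdsWithin t₀ (Icc 0 T)) (nhds 0)

/-- `F : [0,T] → H^N` is differentiable with derivative `F'`. -/
def DerivInHN (N : ℕ) (T : ℝ) {E : Type*} [NormedAddCommGroup E] [NormedSpace ℝ E]
    (F F' : ℝ → Sp → E) : Prop :=
  ∀ t₀ ∈ Icc (0 : ℝ) T,
    Tendsto
      (fun t => SobNorm N (fun s => F t s - F t₀ s - (t - t₀) • F' t₀ s) / |t - t₀|)
      (nhdsWithin t₀ (Icc 0 T \ {t₀})) (nhds 0)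

/-- `t ↦ V(t)` belongs to `C¹([0,T], H^N)`, with derivative the slice of `∂_t V`. -/
def C1InHN (N : ℕ) (T : ℝ) (V : Spt → St) : Prop :=
  ContInHN N T (fun t => tderivSlice V t) ∧
  DerivInHN N T (fun t s => V (st t s)) (fun t => tderivSlice V t)

/-- `f ∈ C_b^k(D)`: `k` times continuously differentiable on `D` with bounded derivatives. -/
def CbOn (k : ℕ) {E : Type*} [NormedAddCommGroup E] [NormedSpace ℝ E]
    (f : Spt → E) (D : Set Spt) : Prop :=
  ContDiffOn ℝ k f D ∧ ∃ M, ∀ x ∈ D, ∀ i ≤ k, ‖iteratedFDerivWithin ℝ i f D x‖ ≤ M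

/-- The assumptions on the initial data: an `H^N` perturbation (`N ≥ 3`) of the constant
state `V̄`, agreeing with `V̄` outside the unit ball, with values in the compact set `K ⊆ 𝒪`,
and with `ψ̊_j = ∂_j φ̊`. -/
structure GoodData (κ2 : ℝ) (R S : ℝ → ℝ → ℝ) (N : ℕ) (Sb pb phib : ℝ) (K : Set St)
    (Vdat : Sp → St) : Prop where
  kpos : 0 < κ2
  eos : GoodEOS R S
  hN : 3 ≤ N
  Sbpos : 0 < Sb
  pbpos : 0 < pb
  phibEq : κ2 * phib + exp (4 * phib) * (R Sb pb - 3 * pb) = 0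
  Kcpt : IsCompact K
  Ksub : K ⊆ adm
  datMem : ∀ s, Vdat s ∈ K
  datSob : MemHN N (fun s => Vdat s - backV Sb (exp (4 * phib) * pb) phib)
  datSobPhi : MemHN (N + 1) (fun s => Phic (Vdat s) - phib)
  datOutside : ∀ s : Sp, 1 < ‖s‖ → Vdat s = backV Sb (exp (4 * phib) * pb) phib
  datPsi : ∀ s, ∀ j : Fin 3, Psic (Vdat s) j.succ = fderiv ℝ (fun y => Phic (Vdat y)) s (e3 j)

/-- `V` is a classical solution of the EN_κ system on `[0,T] × ℝ³` launched by the data `Vdat`,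
taking values in `O2c`, with the regularity
`V - V̄ ∈ C_b¹([0,T]×ℝ³) ∩ C⁰([0,T],H^N) ∩ C¹([0,T],H^{N-1})`. -/
def LaunchesSol (κ2 : ℝ) (R S : ℝ → ℝ → ℝ) (N : ℕ) (Vb : St) (O2c : Set St)
    (Vdat : Sp → St) (T : ℝ) (V : Spt → St) : Prop :=
  IsENSol κ2 R S V (slab T) ∧
  (∀ s, V (st 0 s) = Vdat s) ∧
  (∀ x ∈ slab T, V x ∈ O2c) ∧
  CbOn 1 (fun x => V x - Vb) (slab T) ∧
  ContInHN N T (fun t s => V (st t s) - Vb) ∧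
  C1InHN (N - 1) T V

/-- The time component `J̇⁰` of the energy current of the variation `Vd` with coefficients
defined by the background `W`. -/
def J0 (R S : ℝ → ℝ → ℝ) (W Vd : St) : ℝ :=
  U0 W * (Sc Vd) ^ 2 + (U0 W / Qq R S W) * (Pc Vd) ^ 2
    + 2 * ((∑ k : Fin 3, Uc W k * Uc Vd k) / U0 W) * Pc Vd
    + (Rq R W + Pc W) * U0 W *
        ((∑ k : Fin 3, (Uc Vd k) ^ 2) - (∑ k : Fin 3, Uc W k * Uc Vd k) ^ 2 / (U0 W) ^ 2)
    + (1 / 2) * ((Phic Vd) ^ 2 + ∑ μ : Fin 4, (Psic Vd μ) ^ 2)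

/-- The spatial components `J̇^j` of the energy current. -/
def Jsp (R S : ℝ → ℝ → ℝ) (W Vd : St) (j : Fin 3) : ℝ :=
  Uc W j * (Sc Vd) ^ 2 + (Uc W j / Qq R S W) * (Pc Vd) ^ 2 + 2 * Uc Vd j * Pc Vd
    + (Rq R W + Pc W) * Uc W j *
        ((∑ k : Fin 3, (Uc Vd k) ^ 2) - (∑ k : Fin 3, Uc W k * Uc Vd k) ^ 2 / (U0 W) ^ 2)
    - Psic Vd 0 * Psic Vd j.succ

/-- The spacetime divergence `∂_μ J̇^μ` of the energy current of the variation `Vd` with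
coefficients defined by the background `W`. -/
def divJ (R S : ℝ → ℝ → ℝ) (W Vd : Spt → St) (x : Spt) : ℝ :=
  pd 0 (fun y => J0 R S (W y) (Vd y)) x
    + ∑ j : Fin 3, pd j.succ (fun y => Jsp R S (W y) (Vd y) j) x

/-- The higher-order variation `∂_α V̇` for a spatial multi-index `α`. -/
def DerVar (α : List (Fin 3)) (Vd : Spt → St) : Spt → St :=
  fun x i => pdIter α (fun y => Vd y i) x


private lemma sqp {a : ℝ} (h : a ≠ 0) : 0 < a ^ 2 :=
  (sq_nonneg a).lt_of_ne fun h0 => h (pow_eq_zero_iff two_ne_zero |>.mp h0.symm)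

private lemma possc {M x : ℝ} (hM : 0 < M) (h : 0 < M * x) : 0 < x := by nlinarith

private lemma nnsc {M x : ℝ} (hM : 0 < M) (h : 0 ≤ M * x) : 0 ≤ x := by nlinarith

private lemma cs0 (a1 a2 a3 b1 b2 b3 : ℝ) :
    (a1*b1 + a2*b2 + a3*b3)^2 ≤ (a1^2 + a2^2 + a3^2) * (b1^2 + b2^2 + b3^2) := by
  nlinarith [sq_nonneg (a1*b2 - a2*b1), sq_nonneg (a1*b3 - a3*b1), sq_nonneg (a2*b3 - a3*b2)]

private lemma psd0 (u0 u1 u2 u3 x1 x2 x3 : ℝ) (hu : u1^2 + u2^2 + u3^2 ≤ u0^2) :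
    0 ≤ u0^2*(x1^2 + x2^2 + x3^2) - (u1*x1 + u2*x2 + u3*x3)^2 := by
  have hX : (0:ℝ) ≤ x1^2 + x2^2 + x3^2 := by positivity
  nlinarith [cs0 u1 u2 u3 x1 x2 x3, mul_nonneg (sub_nonneg.2 hu) hX]

private lemma cs3' (u0 u1 u2 u3 w1 w2 w3 v1 v2 v3 : ℝ) (hu : u1^2 + u2^2 + u3^2 ≤ u0^2) :
    (u0^2*(w1*v1 + w2*v2 + w3*v3) - (u1*w1 + u2*w2 + u3*w3) * (u1*v1 + u2*v2 + u3*v3))^2 ≤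
    (u0^2*(w1^2 + w2^2 + w3^2) - (u1*w1 + u2*w2 + u3*w3)^2) *
      (u0^2*(v1^2 + v2^2 + v3^2) - (u1*v1 + u2*v2 + u3*v3)^2) := by
  set a := u0^2*(w1^2 + w2^2 + w3^2) - (u1*w1 + u2*w2 + u3*w3)^2 with ha
  set c := u0^2*(v1^2 + v2^2 + v3^2) - (u1*v1 + u2*v2 + u3*v3)^2 with hc
  set bb := u0^2*(w1*v1 + w2*v2 + w3*v3) - (u1*w1 + u2*w2 + u3*w3) * (u1*v1 + u2*v2 + u3*v3)
    with hbb
  have key : ∀ tt : ℝ, 0 ≤ a * (tt * tt) + (2*bb) * tt + c := by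
    intro tt
    have h := psd0 u0 u1 u2 u3 (tt*w1 + v1) (tt*w2 + v2) (tt*w3 + v3) hu
    have heq : a * (tt * tt) + (2*bb) * tt + c =
        u0^2*((tt*w1 + v1)^2 + (tt*w2 + v2)^2 + (tt*w3 + v3)^2) -
          (u1*(tt*w1 + v1) + u2*(tt*w2 + v2) + u3*(tt*w3 + v3))^2 := by
      rw [ha, hbb, hc]; ring
    rw [heq]; exact h
  have hd := discrim_le_zero key
  rw [discrim] at hd
  nlinarith [hd]

private lemma chain {u0 A bs Cs mp x0z n lhs fac : ℝ} (sg : ℝ) (hu02 : 0 < u0^2)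
    (hcs : lhs^2 ≤ fac*mp) (hL : lhs = u0^2*bs) (hF : fac = u0^2*Cs)
    (hA2 : A^2*u0^2 = Cs + u0^2*x0z)
    (hmpn : n ≤ mp) (hx0z : 0 < x0z) :
    x0z*n + (1 - sg^2)*bs^2 ≤ A^2*mp - sg^2*bs^2 := by
  rw [hL, hF] at hcs
  have h1 : u0^2*(u0^2*(bs^2)) ≤ u0^2*(Cs*mp) := by nlinarith [hcs]
  have hbs2 : u0^2*(bs^2) ≤ Cs*mp := le_of_mul_le_mul_left h1 hu02
  have hA2m : A^2*u0^2*mp = Cs*mp + u0^2*x0z*mp := by linear_combination mp * hA2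
  have hstep : u0^2*(bs^2 + x0z*mp) ≤ u0^2*(A^2*mp) := by nlinarith [hbs2, hA2m]
  have hdiv : bs^2 + x0z*mp ≤ A^2*mp := le_of_mul_le_mul_left hstep hu02
  have hmn : x0z*n ≤ x0z*mp := mul_le_mul_of_nonneg_left hmpn hx0z.le
  linarith

private lemma p3a {a : ℝ} (b c : ℝ) (h : a ≠ 0) : 0 < a^2 + b^2 + c^2 := by
  have := sqp h; nlinarith [sq_nonneg b, sq_nonneg c]

private lemma p3b {b : ℝ} (a c : ℝ) (h : b ≠ 0) : 0 < a^2 + b^2 + c^2 := by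
  have := sqp h; nlinarith [sq_nonneg a, sq_nonneg c]

private lemma p3c {c : ℝ} (a b : ℝ) (h : c ≠ 0) : 0 < a^2 + b^2 + c^2 := by
  have := sqp h; nlinarith [sq_nonneg a, sq_nonneg b]

private lemma blockE2 (QQ A u0 p bs RP mp sg x0z n E2 : ℝ)
    (hQQ : 0 < QQ) (hA : 0 < A) (hu0 : 0 < u0) (hRP : 0 < RP)
    (hsg0 : 0 < sg) (hsg1 : sg < 1) (hx0z : 0 < x0z) (hn0 : 0 ≤ n)
    (hKey : x0z*n + (1 - sg^2)*bs^2 ≤ A^2*mp - sg^2*bs^2)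
    (hE2eq : (QQ*A*u0^2) * E2 = (A*u0*p + QQ*bs)^2 + QQ*RP*(A^2*mp - sg^2*bs^2)) :
    0 ≤ E2 ∧ ((p ≠ 0 ∨ 0 < n) → 0 < E2) := by
  have hM : 0 < QQ*A*u0^2 := by positivity
  have h1s : (0:ℝ) ≤ 1 - sg^2 := by nlinarith
  have hcore : 0 ≤ A^2*mp - sg^2*bs^2 := by
    nlinarith [hKey, mul_nonneg hx0z.le hn0, mul_nonneg h1s (sq_nonneg bs)]
  constructor
  · exact nnsc hM (by
      rw [hE2eq]
      exact add_nonneg (sq_nonneg _) (mul_nonneg (mul_pos hQQ hRP).le hcore))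
  · intro hcase
    apply possc hM
    rw [hE2eq]
    rcases hcase with hp | hn
    · by_cases hbs : bs = 0
      · have hne : A*u0*p ≠ 0 := mul_ne_zero (mul_ne_zero hA.ne' hu0.ne') hp
        have h2 : 0 < (A*u0*p + QQ*bs)^2 := by rw [hbs]; simpa using sqp hne
        have h3 := mul_nonneg (mul_pos hQQ hRP).le hcore
        linarith
      · have h3 : 0 < A^2*mp - sg^2*bs^2 := by
          nlinarith [hKey, mul_nonneg hx0z.le hn0,
            mul_pos (show (0:ℝ) < 1 - sg^2 by nlinarith) (sqp hbs)]
        nlinarith [sq_nonneg (A*u0*p + QQ*bs), mul_pos (mul_pos hQQ hRP) h3]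
    · have h3 : 0 < A^2*mp - sg^2*bs^2 := by
        nlinarith [hKey, mul_pos hx0z hn, mul_nonneg h1s (sq_nonneg bs)]
      nlinarith [sq_nonneg (A*u0*p + QQ*bs), mul_pos (mul_pos hQQ hRP) h3]

private lemma blockE4 (x0 z q0 y P2 E4 : ℝ) (hx0 : 0 < x0) (hz : z < x0^2)
    (hcs : y^2 ≤ z*P2) (hP20 : 0 ≤ P2)
    (hE4 : (2*x0)*E4 = x0^2*q0^2 + x0^2*P2 - 2*x0*q0*y) :
    0 ≤ E4 ∧ ((q0 ≠ 0 ∨ 0 < P2) → 0 < E4) := by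
  have h2x0 : (0:ℝ) < 2*x0 := by linarith
  have hS3 : 0 ≤ (x0^2 - z)*P2 := mul_nonneg (by linarith) hP20
  constructor
  · exact nnsc h2x0 (by rw [hE4]; nlinarith [sq_nonneg (x0*q0 - y), hcs, hS3])
  · intro hcase
    apply possc h2x0
    rw [hE4]
    rcases hcase with hq | hP
    · rcases hP20.eq_or_lt with hP0 | hPpos
      · have hzP : z*P2 = 0 := by rw [← hP0]; ring
        have hy2 : y^2 = 0 := le_antisymm (by linarith) (sq_nonneg y)
        have hy : y = 0 := pow_eq_zero_iff two_ne_zero |>.mp hy2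
        have hxP : x0^2*P2 = 0 := by rw [← hP0]; ring
        have hq2 := sqp hq
        have hx2 : 0 < x0^2 := by positivity
        nlinarith [mul_pos hx2 hq2, hy, hxP]
      · nlinarith [sq_nonneg (x0*q0 - y), hcs,
          mul_pos (show (0:ℝ) < x0^2 - z by linarith) hPpos]
    · nlinarith [sq_nonneg (x0*q0 - y), hcs,
        mul_pos (show (0:ℝ) < x0^2 - z by linarith) hP]

set_option maxHeartbeats 2000000 in
/-- Positive definiteness of the energy current contracted with covectors
in the positive component of the inner characteristic core: if `P̃ > 0` (the other positivity
properties following from the equation-of-state assumptions) and `ξ_μ ξ^μ < 0`, `ξ₀ > 0`,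
then `ξ_μ J̇^μ(V̇,V̇) > 0` for every nonzero variation `V̇`. -/
theorem energy_current_positive_definite
    (R S : ℝ → ℝ → ℝ) (hEOS : GoodEOS R S)
    (W : St) (hP : 0 < Pc W)
    (ξ : Fin 4 → ℝ)
    (hξtime : (∑ μ, ∑ ν, gInv μ ν * ξ μ * ξ ν) < 0)
    (hξ0 : 0 < ξ 0)
    (Vd : St) (hVd : Vd ≠ 0) :
    0 < ξ 0 * J0 R S W Vd + ∑ j : Fin 3, ξ j.succ * Jsp R S W Vd j := by

  obtain ⟨-, -, hRpos, hSrange⟩ := hEOS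
  have hgsum : (∑ μ, ∑ ν, gInv μ ν * ξ μ * ξ ν) = -(ξ 0^2) + (ξ 1^2 + ξ 2^2 + ξ 3^2) := by
    simp [gInv, Fin.sum_univ_four]; ring
  rw [hgsum] at hξtime
  simp only [J0, Jsp, Fin.sum_univ_three, Fin.sum_univ_four,
    show (Fin.succ (0:Fin 3)) = (1:Fin 4) from rfl,
    show (Fin.succ (1:Fin 3)) = (2:Fin 4) from rfl,
    show (Fin.succ (2:Fin 3)) = (3:Fin 4) from rfl,
    show Sc Vd = Vd 0 from rfl, show Pc Vd = Vd 1 from rfl, show Pc W = W 1 from rfl,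
    show Phic Vd = Vd 5 from rfl,
    show Uc W 0 = W 2 from rfl, show Uc W 1 = W 3 from rfl, show Uc W 2 = W 4 from rfl,
    show Uc Vd 0 = Vd 2 from rfl, show Uc Vd 1 = Vd 3 from rfl, show Uc Vd 2 = Vd 4 from rfl,
    show Psic Vd 0 = Vd 6 from rfl, show Psic Vd 1 = Vd 7 from rfl,
    show Psic Vd 2 = Vd 8 from rfl, show Psic Vd 3 = Vd 9 from rfl]
  have hPW : 0 < W 1 := hP
  have hRR : 0 < (Rq R W) := mul_pos (Real.exp_pos _) (hRpos _ _)
  have hRP : 0 < (Rq R W) + W 1 := by linarith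
  have hsg0 : 0 < (sigq S W) := (hSrange _ _).1
  have hsg1 : (sigq S W) < 1 := (hSrange _ _).2
  have hQdef : (Qq R S W) = (sigq S W)^2 * ((Rq R W) + W 1) := rfl
  have hQQ : 0 < (Qq R S W) := by rw [hQdef]; positivity
  have hu0pos : 0 < (U0 W) := by rw [U0]; exact Real.sqrt_pos.mpr (by positivity)
  have hu0sq : (U0 W)^2 = 1 + (W 2^2 + W 3^2 + W 4^2) := by
    rw [U0, Real.sq_sqrt (by positivity)]
    simp only [Fin.sum_univ_three, show Uc W 0 = W 2 from rfl,
      show Uc W 1 = W 3 from rfl, show Uc W 2 = W 4 from rfl]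
  have hx0 : 0 < ξ 0 := hξ0
  have hz : (ξ 1^2 + ξ 2^2 + ξ 3^2) < ξ 0^2 := by linarith
  have hzd : (0:ℝ) < (ξ 0^2 - (ξ 1^2 + ξ 2^2 + ξ 3^2)) := by linarith
  have hu' : (W 2^2 + W 3^2 + W 4^2) = (U0 W)^2 - 1 := by linarith [hu0sq]
  have huE : (W 2^2 + W 3^2 + W 4^2) ≤ (U0 W)^2 := by linarith
  have hu02 : (0:ℝ) < (U0 W)^2 := by positivity
  have hA : 0 < (ξ 0*(U0 W) + (ξ 1*W 2 + ξ 2*W 3 + ξ 3*W 4)) := by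
    nlinarith [cs0 (ξ 1) (ξ 2) (ξ 3) (W 2) (W 3) (W 4), hz, hu',
      mul_pos hx0 hu0pos, mul_pos hx0 hx0, sq_nonneg (W 2), sq_nonneg (W 3), sq_nonneg (W 4)]
  have hn0 : (0:ℝ) ≤ (Vd 2^2 + Vd 3^2 + Vd 4^2) := by positivity
  have hP20 : (0:ℝ) ≤ (Vd 7^2 + Vd 8^2 + Vd 9^2) := by positivity
  have hmpn : (Vd 2^2 + Vd 3^2 + Vd 4^2) ≤ ((U0 W)^2*(Vd 2^2 + Vd 3^2 + Vd 4^2) - (W 2*Vd 2 + W 3*Vd 3 + W 4*Vd 4)^2) := by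
    nlinarith [cs0 (W 2) (W 3) (W 4) (Vd 2) (Vd 3) (Vd 4), hu', hn0]
  have hcs := cs3' (U0 W) (W 2) (W 3) (W 4) ((ξ 0*(W 2) + (U0 W)*(ξ 1)) + (ξ 0*(W 2^2 + W 3^2 + W 4^2) + (U0 W)*(ξ 1*W 2 + ξ 2*W 3 + ξ 3*W 4))*(W 2)) ((ξ 0*(W 3) + (U0 W)*(ξ 2)) + (ξ 0*(W 2^2 + W 3^2 + W 4^2) + (U0 W)*(ξ 1*W 2 + ξ 2*W 3 + ξ 3*W 4))*(W 3)) ((ξ 0*(W 4) + (U0 W)*(ξ 3)) + (ξ 0*(W 2^2 + W 3^2 + W 4^2) + (U0 W)*(ξ 1*W 2 + ξ 2*W 3 + ξ 3*W 4))*(W 4)) (Vd 2) (Vd 3) (Vd 4) huE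
  have hL : (U0 W)^2*(((ξ 0*(W 2) + (U0 W)*(ξ 1)) + (ξ 0*(W 2^2 + W 3^2 + W 4^2) + (U0 W)*(ξ 1*W 2 + ξ 2*W 3 + ξ 3*W 4))*(W 2))*Vd 2 + ((ξ 0*(W 3) + (U0 W)*(ξ 2)) + (ξ 0*(W 2^2 + W 3^2 + W 4^2) + (U0 W)*(ξ 1*W 2 + ξ 2*W 3 + ξ 3*W 4))*(W 3))*Vd 3 + ((ξ 0*(W 4) + (U0 W)*(ξ 3)) + (ξ 0*(W 2^2 + W 3^2 + W 4^2) + (U0 W)*(ξ 1*W 2 + ξ 2*W 3 + ξ 3*W 4))*(W 4))*Vd 4) -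
      (W 2*((ξ 0*(W 2) + (U0 W)*(ξ 1)) + (ξ 0*(W 2^2 + W 3^2 + W 4^2) + (U0 W)*(ξ 1*W 2 + ξ 2*W 3 + ξ 3*W 4))*(W 2)) + W 3*((ξ 0*(W 3) + (U0 W)*(ξ 2)) + (ξ 0*(W 2^2 + W 3^2 + W 4^2) + (U0 W)*(ξ 1*W 2 + ξ 2*W 3 + ξ 3*W 4))*(W 3)) + W 4*((ξ 0*(W 4) + (U0 W)*(ξ 3)) + (ξ 0*(W 2^2 + W 3^2 + W 4^2) + (U0 W)*(ξ 1*W 2 + ξ 2*W 3 + ξ 3*W 4))*(W 4))) * (W 2*Vd 2 + W 3*Vd 3 + W 4*Vd 4) = (U0 W)^2*(ξ 0*(W 2*Vd 2 + W 3*Vd 3 + W 4*Vd 4) + (U0 W)*(ξ 1*Vd 2 + ξ 2*Vd 3 + ξ 3*Vd 4)) := by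
    linear_combination (-((ξ 0*(W 2^2 + W 3^2 + W 4^2) + (U0 W)*(ξ 1*W 2 + ξ 2*W 3 + ξ 3*W 4))*(W 2*Vd 2 + W 3*Vd 3 + W 4*Vd 4))) * hu'
  have hF : (U0 W)^2*(((ξ 0*(W 2) + (U0 W)*(ξ 1)) + (ξ 0*(W 2^2 + W 3^2 + W 4^2) + (U0 W)*(ξ 1*W 2 + ξ 2*W 3 + ξ 3*W 4))*(W 2))^2 + ((ξ 0*(W 3) + (U0 W)*(ξ 2)) + (ξ 0*(W 2^2 + W 3^2 + W 4^2) + (U0 W)*(ξ 1*W 2 + ξ 2*W 3 + ξ 3*W 4))*(W 3))^2 + ((ξ 0*(W 4) + (U0 W)*(ξ 3)) + (ξ 0*(W 2^2 + W 3^2 + W 4^2) + (U0 W)*(ξ 1*W 2 + ξ 2*W 3 + ξ 3*W 4))*(W 4))^2) -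
      (W 2*((ξ 0*(W 2) + (U0 W)*(ξ 1)) + (ξ 0*(W 2^2 + W 3^2 + W 4^2) + (U0 W)*(ξ 1*W 2 + ξ 2*W 3 + ξ 3*W 4))*(W 2)) + W 3*((ξ 0*(W 3) + (U0 W)*(ξ 2)) + (ξ 0*(W 2^2 + W 3^2 + W 4^2) + (U0 W)*(ξ 1*W 2 + ξ 2*W 3 + ξ 3*W 4))*(W 3)) + W 4*((ξ 0*(W 4) + (U0 W)*(ξ 3)) + (ξ 0*(W 2^2 + W 3^2 + W 4^2) + (U0 W)*(ξ 1*W 2 + ξ 2*W 3 + ξ 3*W 4))*(W 4)))^2 = (U0 W)^2*((ξ 0*(W 2) + (U0 W)*(ξ 1))^2 + (ξ 0*(W 3) + (U0 W)*(ξ 2))^2 + (ξ 0*(W 4) + (U0 W)*(ξ 3))^2 + (ξ 0*(W 2^2 + W 3^2 + W 4^2) + (U0 W)*(ξ 1*W 2 + ξ 2*W 3 + ξ 3*W 4))^2) := by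
    linear_combination (-((ξ 0*(W 2^2 + W 3^2 + W 4^2) + (U0 W)*(ξ 1*W 2 + ξ 2*W 3 + ξ 3*W 4))^2*(1 + (W 2^2 + W 3^2 + W 4^2)))) * hu'
  have hA2 : (ξ 0*(U0 W) + (ξ 1*W 2 + ξ 2*W 3 + ξ 3*W 4))^2*(U0 W)^2 = ((ξ 0*(W 2) + (U0 W)*(ξ 1))^2 + (ξ 0*(W 3) + (U0 W)*(ξ 2))^2 + (ξ 0*(W 4) + (U0 W)*(ξ 3))^2 + (ξ 0*(W 2^2 + W 3^2 + W 4^2) + (U0 W)*(ξ 1*W 2 + ξ 2*W 3 + ξ 3*W 4))^2) + (U0 W)^2*(ξ 0^2 - (ξ 1^2 + ξ 2^2 + ξ 3^2)) := by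
    linear_combination (-(ξ 0^2*((U0 W)^2 + (W 2^2 + W 3^2 + W 4^2)) + 2*ξ 0*(U0 W)*(ξ 1*W 2 + ξ 2*W 3 + ξ 3*W 4))) * hu'
  have hKey := chain (sigq S W) hu02 hcs hL hF hA2 hmpn hzd
  have hE2eq : ((Qq R S W)*(ξ 0*(U0 W) + (ξ 1*W 2 + ξ 2*W 3 + ξ 3*W 4))*(U0 W)^2) * (((ξ 0*(U0 W) + (ξ 1*W 2 + ξ 2*W 3 + ξ 3*W 4))/(Qq R S W))*(Vd 1)^2 + 2*(Vd 1)*((ξ 0*(W 2*Vd 2 + W 3*Vd 3 + W 4*Vd 4))/(U0 W) + (ξ 1*Vd 2 + ξ 2*Vd 3 + ξ 3*Vd 4)) + ((Rq R W) + W 1)*(ξ 0*(U0 W) + (ξ 1*W 2 + ξ 2*W 3 + ξ 3*W 4))*((Vd 2^2 + Vd 3^2 + Vd 4^2) - (W 2*Vd 2 + W 3*Vd 3 + W 4*Vd 4)^2/(U0 W)^2)) = ((ξ 0*(U0 W) + (ξ 1*W 2 + ξ 2*W 3 + ξ 3*W 4))*(U0 W)*(Vd 1) + (Qq R S W)*(ξ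 0*(W 2*Vd 2 + W 3*Vd 3 + W 4*Vd 4) + (U0 W)*(ξ 1*Vd 2 + ξ 2*Vd 3 + ξ 3*Vd 4)))^2 +
      (Qq R S W)*((Rq R W) + W 1)*((ξ 0*(U0 W) + (ξ 1*W 2 + ξ 2*W 3 + ξ 3*W 4))^2*((U0 W)^2*(Vd 2^2 + Vd 3^2 + Vd 4^2) - (W 2*Vd 2 + W 3*Vd 3 + W 4*Vd 4)^2) - (sigq S W)^2*(ξ 0*(W 2*Vd 2 + W 3*Vd 3 + W 4*Vd 4) + (U0 W)*(ξ 1*Vd 2 + ξ 2*Vd 3 + ξ 3*Vd 4))^2) := by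
    rw [hQdef]
    have h1 := hsg0.ne'
    have h2 := hRP.ne'
    have h3 := hu0pos.ne'
    field_simp
    ring
  obtain ⟨hB2n, hB2s⟩ := blockE2 (Qq R S W) (ξ 0*(U0 W) + (ξ 1*W 2 + ξ 2*W 3 + ξ 3*W 4)) (U0 W) (Vd 1) (ξ 0*(W 2*Vd 2 + W 3*Vd 3 + W 4*Vd 4) + (U0 W)*(ξ 1*Vd 2 + ξ 2*Vd 3 + ξ 3*Vd 4)) ((Rq R W) + W 1) ((U0 W)^2*(Vd 2^2 + Vd 3^2 + Vd 4^2) - (W 2*Vd 2 + W 3*Vd 3 + W 4*Vd 4)^2) (sigq S W) (ξ 0^2 - (ξ 1^2 + ξ 2^2 + ξ 3^2))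
    (Vd 2^2 + Vd 3^2 + Vd 4^2) (((ξ 0*(U0 W) + (ξ 1*W 2 + ξ 2*W 3 + ξ 3*W 4))/(Qq R S W))*(Vd 1)^2 + 2*(Vd 1)*((ξ 0*(W 2*Vd 2 + W 3*Vd 3 + W 4*Vd 4))/(U0 W) + (ξ 1*Vd 2 + ξ 2*Vd 3 + ξ 3*Vd 4)) + ((Rq R W) + W 1)*(ξ 0*(U0 W) + (ξ 1*W 2 + ξ 2*W 3 + ξ 3*W 4))*((Vd 2^2 + Vd 3^2 + Vd 4^2) - (W 2*Vd 2 + W 3*Vd 3 + W 4*Vd 4)^2/(U0 W)^2)) hQQ hA hu0pos hRP hsg0 hsg1 hzd hn0 hKey hE2eq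
  have hcsq := cs0 (ξ 1) (ξ 2) (ξ 3) (Vd 7) (Vd 8) (Vd 9)
  have hE4eq : (2*(ξ 0)) * ((ξ 0/2)*(Vd 6^2 + (Vd 7^2 + Vd 8^2 + Vd 9^2)) - Vd 6*(ξ 1*Vd 7 + ξ 2*Vd 8 + ξ 3*Vd 9)) = ξ 0^2*(Vd 6)^2 + ξ 0^2*(Vd 7^2 + Vd 8^2 + Vd 9^2) - 2*(ξ 0)*(Vd 6)*(ξ 1*Vd 7 + ξ 2*Vd 8 + ξ 3*Vd 9) := by
    ring
  obtain ⟨hB4n, hB4s⟩ := blockE4 (ξ 0) (ξ 1^2 + ξ 2^2 + ξ 3^2) (Vd 6) (ξ 1*Vd 7 + ξ 2*Vd 8 + ξ 3*Vd 9) (Vd 7^2 + Vd 8^2 + Vd 9^2) ((ξ 0/2)*(Vd 6^2 + (Vd 7^2 + Vd 8^2 + Vd 9^2)) - Vd 6*(ξ 1*Vd 7 + ξ 2*Vd 8 + ξ 3*Vd 9)) hx0 hz hcsq hP20 hE4eq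
  have hB1n : (0:ℝ) ≤ (ξ 0*(U0 W) + (ξ 1*W 2 + ξ 2*W 3 + ξ 3*W 4))*(Vd 0)^2 := mul_nonneg hA.le (sq_nonneg _)
  have hB3n : (0:ℝ) ≤ (ξ 0/2)*(Vd 5)^2 := by positivity
  rw [show (ξ 0 * (U0 W * Vd 0 ^ 2 + U0 W / Qq R S W * Vd 1 ^ 2 + 2 * ((W 2 * Vd 2 + W 3 * Vd 3 + W 4 * Vd 4) / U0 W) * Vd 1 + (Rq R W + W 1) * U0 W * (Vd 2 ^ 2 + Vd 3 ^ 2 + Vd 4 ^ 2 - (W 2 * Vd 2 + W 3 * Vd 3 + W 4 * Vd 4) ^ 2 / U0 W ^ 2) + 1 / 2 * (Vd 5 ^ 2 + (Vd 6 ^ 2 + Vd 7 ^ 2 + Vd 8 ^ 2 + Vd 9 ^ 2))) + (ξ 1 * (W 2 * Vd 0 ^ 2 + W 2 / Qq R S W * Vd 1 ^ 2 + 2 * Vd 2 * Vd 1 + (Rq R W + W 1) * W 2 * (Vd 2 ^ 2 + Vd 3 ^ 2 + Vd 4 ^ 2 - (W 2 * Vd 2 + W 3 * Vd 3 + W 4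 * Vd 4) ^ 2 / U0 W ^ 2) - Vd 6 * Vd 7) + ξ 2 * (W 3 * Vd 0 ^ 2 + W 3 / Qq R S W * Vd 1 ^ 2 + 2 * Vd 3 * Vd 1 + (Rq R W + W 1) * W 3 * (Vd 2 ^ 2 + Vd 3 ^ 2 + Vd 4 ^ 2 - (W 2 * Vd 2 + W 3 * Vd 3 + W 4 * Vd 4) ^ 2 / U0 W ^ 2) - Vd 6 * Vd 8) + ξ 3 * (W 4 * Vd 0 ^ 2 + W 4 / Qq R S W * Vd 1 ^ 2 + 2 * Vd 4 * Vd 1 + (Rq R W + W 1) * W 4 * (Vd 2 ^ 2 + Vd 3 ^ 2 + Vd 4 ^ 2 - (W 2 * Vd 2 + W 3 * Vd 3 + W 4 * Vd 4) ^ 2 / U0 W ^ 2) - Vd 6 * Vd 9))) = (ξ 0*(U0 W) + (ξ 1*W 2 + ξ 2*W 3 + ξ 3*W 4))*(Vd 0)^2 + (((ξ 0*(U0 W) + (ξ 1*W 2 + ξ 2*W 3 + ξ 3*W 4))/(Qq R S W))*(Vd 1)^2 + 2*(Vd 1)*((ξ 0*(W 2*Vd 2 + W 3*Vd 3 + W 4*Vd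 4))/(U0 W) + (ξ 1*Vd 2 + ξ 2*Vd 3 + ξ 3*Vd 4)) + ((Rq R W) + W 1)*(ξ 0*(U0 W) + (ξ 1*W 2 + ξ 2*W 3 + ξ 3*W 4))*((Vd 2^2 + Vd 3^2 + Vd 4^2) - (W 2*Vd 2 + W 3*Vd 3 + W 4*Vd 4)^2/(U0 W)^2)) + (ξ 0/2)*(Vd 5)^2 + ((ξ 0/2)*(Vd 6^2 + (Vd 7^2 + Vd 8^2 + Vd 9^2)) - Vd 6*(ξ 1*Vd 7 + ξ 2*Vd 8 + ξ 3*Vd 9)) from by ring]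
  have hex : ∃ i, Vd i ≠ 0 := by
    by_contra hcon
    push_neg at hcon
    exact hVd (funext hcon)
  obtain ⟨i, hi⟩ := hex
  fin_cases i
  · have h1 : (0:ℝ) < (ξ 0*(U0 W) + (ξ 1*W 2 + ξ 2*W 3 + ξ 3*W 4))*(Vd 0)^2 := mul_pos hA (sqp hi)
    linarith only [h1, hB2n, hB3n, hB4n]
  · have h1 := hB2s (Or.inl hi)
    linarith only [hB1n, h1, hB3n, hB4n]
  · have h1 := hB2s (Or.inr (p3a (Vd 3) (Vd 4) hi))
    linarith only [hB1n, h1, hB3n, hB4n]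
  · have h1 := hB2s (Or.inr (p3b (Vd 2) (Vd 4) hi))
    linarith only [hB1n, h1, hB3n, hB4n]
  · have h1 := hB2s (Or.inr (p3c (Vd 2) (Vd 3) hi))
    linarith only [hB1n, h1, hB3n, hB4n]
  · have h1 : (0:ℝ) < (ξ 0/2)*(Vd 5)^2 := mul_pos (by linarith) (sqp hi)
    linarith only [hB1n, hB2n, h1, hB4n]
  · have h1 := hB4s (Or.inl hi)
    linarith only [hB1n, hB2n, hB3n, h1]
  · have h1 := hB4s (Or.inr (p3a (Vd 8) (Vd 9) hi))
    linarith only [hB1n, hB2n, hB3n, h1]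
  · have h1 := hB4s (Or.inr (p3b (Vd 7) (Vd 9) hi))
    linarith only [hB1n, hB2n, hB3n, h1]
  · have h1 := hB4s (Or.inr (p3c (Vd 7) (Vd 8) hi))
    linarith only [hB1n, hB2n, hB3n, h1]


end EN
end
end

section
/- Uniform positive definiteness of J̇⁰ over a compact set of backgrounds: Let closure(𝒪₂) be a compact subset of the admissible set 𝒪 = {V ∈ ℝ¹⁰ : S > 0, P > 0}. Then there exists a constant C with 0 < C < 1, depending only on closure(𝒪₂), such that for every background state Ṽ ∈ closure(𝒪₂) and every variation V̇ ∈ ℝ¹⁰, C |V̇|² ≤ J̇⁰(V̇,V̇) ≤ C⁻¹ |V̇|², where J̇⁰ is the time component of the energy current of V̇ with coefficients defined by Ṽ and |·| is the Euclidean norm on ℝ¹⁰. -/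
noncomputable section
open MeasureTheory Real Set Filter Metric

namespace EN

/-! ### Auxiliary lemmas for Statement 10 -/

private lemma sum10 (f : Fin 10 → ℝ) : ∑ i, f i
    = f 0 + f 1 + f 2 + f 3 + f 4 + f 5 + f 6 + f 7 + f 8 + f 9 := by
  rw [Fin.sum_univ_succ, Fin.sum_univ_succ, Fin.sum_univ_eight]
  norm_num [show (Fin.succ 0 : Fin 10) = 1 from rfl,
    show ((0:Fin 8).succ.succ : Fin 10) = 2 from rfl,
    show ((1:Fin 8).succ.succ : Fin 10) = 3 from rfl, show (Fin.succ 2 : Fin 10) = 3 from rfl,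
    show ((2:Fin 8).succ.succ : Fin 10) = 4 from rfl,
    show ((3:Fin 8).succ.succ : Fin 10) = 5 from rfl,
    show ((4:Fin 8).succ.succ : Fin 10) = 6 from rfl,
    show ((5:Fin 8).succ.succ : Fin 10) = 7 from rfl,
    show ((6:Fin 8).succ.succ : Fin 10) = 8 from rfl,
    show ((7:Fin 8).succ.succ : Fin 10) = 9 from rfl]
  ring

private lemma sum_sq_decomp (Vd : St) : ∑ i, Vd i ^ 2
    = Sc Vd ^ 2 + Pc Vd ^ 2 + (∑ k : Fin 3, (Uc Vd k) ^ 2)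
      + Phic Vd ^ 2 + ∑ μ : Fin 4, (Psic Vd μ) ^ 2 := by
  rw [sum10 (fun i => Vd i ^ 2), Fin.sum_univ_three, Fin.sum_univ_four]
  simp only [Sc, Pc, Uc, Phic, Psic,
    show (⟨2 + ((0:Fin 3):ℕ), by omega⟩ : Fin 10) = 2 from rfl,
    show (⟨2 + ((1:Fin 3):ℕ), by omega⟩ : Fin 10) = 3 from rfl,
    show (⟨2 + ((2:Fin 3):ℕ), by omega⟩ : Fin 10) = 4 from rfl,
    show (⟨6 + ((0:Fin 4):ℕ), by omega⟩ : Fin 10) = 6 from rfl,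
    show (⟨6 + ((1:Fin 4):ℕ), by omega⟩ : Fin 10) = 7 from rfl,
    show (⟨6 + ((2:Fin 4):ℕ), by omega⟩ : Fin 10) = 8 from rfl,
    show (⟨6 + ((3:Fin 4):ℕ), by omega⟩ : Fin 10) = 9 from rfl]
  ring

private lemma J0_smul (R S : ℝ → ℝ → ℝ) (W Vd : St) (r : ℝ) :
    J0 R S W (r • Vd) = r ^ 2 * J0 R S W Vd := by
  have h0 : Sc (r • Vd) = r * Sc Vd := rfl
  have h1 : Pc (r • Vd) = r * Pc Vd := rfl
  have h2 : ∀ k, Uc (r • Vd) k = r * Uc Vd k := fun _ => rfl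
  have h3 : Phic (r • Vd) = r * Phic Vd := rfl
  have h4 : ∀ μ, Psic (r • Vd) μ = r * Psic Vd μ := fun _ => rfl
  simp only [J0, h0, h1, h2, h3, h4, Fin.sum_univ_three, Fin.sum_univ_four]
  ring

private lemma quad_pos (t E σ P' a usq : ℝ) (ht : 1 ≤ t) (hE : 0 < E)
    (hσ0 : 0 < σ) (hσ1 : σ < 1) (hcs : a ^ 2 ≤ (t ^ 2 - 1) * usq) (hu : 0 ≤ usq)
    (hne : 0 < P' ^ 2 + usq) :
    0 < t / (σ ^ 2 * E) * P' ^ 2 + 2 * (a / t) * P' + E * t * (usq - a ^ 2 / t ^ 2) := by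
  have ht0 : (0:ℝ) < t := by linarith
  have hQ : (0:ℝ) < σ ^ 2 * E := by positivity
  have key : (t / (σ ^ 2 * E) * P' ^ 2 + 2 * (a / t) * P' + E * t * (usq - a ^ 2 / t ^ 2))
      * (σ ^ 2 * E * t ^ 3)
      = (t ^ 2 * P' + σ ^ 2 * E * a) ^ 2
        + σ ^ 2 * E ^ 2 * (t ^ 4 * usq - (t ^ 2 + σ ^ 2) * a ^ 2) := by
    field_simp
    ring
  have h2 : 0 < (t ^ 2 * P' + σ ^ 2 * E * a) ^ 2
      + σ ^ 2 * E ^ 2 * (t ^ 4 * usq - (t ^ 2 + σ ^ 2) * a ^ 2) := by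
    rcases eq_or_lt_of_le hu with h | h
    · have ha : a = 0 := by nlinarith [sq_nonneg a]
      have hP : P' ^ 2 ≠ 0 := by nlinarith
      have hP' : 0 < P' ^ 2 := lt_of_le_of_ne (sq_nonneg _) (Ne.symm hP)
      rw [ha, ← h]
      ring_nf
      nlinarith [mul_pos (mul_pos (mul_pos ht0 ht0) (mul_pos ht0 ht0)) hP']
    · have hσ2 : σ ^ 2 < 1 := by nlinarith
      have hkey : 0 < t ^ 4 * usq - (t ^ 2 + σ ^ 2) * a ^ 2 := by
        have h1 : (t ^ 2 + σ ^ 2) * a ^ 2 ≤ (t ^ 2 + σ ^ 2) * ((t ^ 2 - 1) * usq) :=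
          mul_le_mul_of_nonneg_left hcs (by positivity)
        have h5 : (0:ℝ) < t ^ 2 * (1 - σ ^ 2) + σ ^ 2 := by
          nlinarith [mul_nonneg (sq_nonneg t) (by linarith : (0:ℝ) ≤ 1 - σ ^ 2),
            pow_pos hσ0 2]
        have h6 : t ^ 4 * usq - (t ^ 2 + σ ^ 2) * ((t ^ 2 - 1) * usq)
            = usq * (t ^ 2 * (1 - σ ^ 2) + σ ^ 2) := by ring
        linarith [h1, mul_pos h h5, h6]
      have h7 : 0 < σ ^ 2 * E ^ 2 * (t ^ 4 * usq - (t ^ 2 + σ ^ 2) * a ^ 2) :=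
        mul_pos (by positivity) hkey
      linarith [sq_nonneg (t ^ 2 * P' + σ ^ 2 * E * a), h7]
  have hc : (0:ℝ) < σ ^ 2 * E * t ^ 3 := by positivity
  by_contra hcon
  push_neg at hcon
  have h4 : (0:ℝ) < (t / (σ ^ 2 * E) * P' ^ 2 + 2 * (a / t) * P'
      + E * t * (usq - a ^ 2 / t ^ 2)) * (σ ^ 2 * E * t ^ 3) := by rw [key]; exact h2
  have h5 := mul_nonpos_of_nonpos_of_nonneg hcon hc.le
  linarith

private lemma Qq_eq (R S : ℝ → ℝ → ℝ) (W : St) :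
    Qq R S W = sigq S W ^ 2 * (Rq R W + Pc W) := rfl

private lemma U0_sq (W : St) : U0 W ^ 2 = 1 + ∑ k : Fin 3, (Uc W k) ^ 2 := by
  rw [U0]
  exact Real.sq_sqrt (by positivity)

private lemma U0_ge_one (W : St) : 1 ≤ U0 W := by
  have h1 := U0_sq W
  have h2 : 0 ≤ U0 W := Real.sqrt_nonneg _
  have h3 : 0 ≤ ∑ k : Fin 3, (Uc W k) ^ 2 :=
    Finset.sum_nonneg fun k _ => sq_nonneg _
  nlinarith

private lemma J0_pos (R S : ℝ → ℝ → ℝ) (hEOS : GoodEOS R S) (W : St) (hW : 0 < Pc W)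
    (Vd : St) (hVd : 0 < ∑ i, (Vd i) ^ 2) : 0 < J0 R S W Vd := by
  obtain ⟨-, -, hR, hS⟩ := hEOS
  have hsig := hS (Sc W) (Real.exp (-(4 * Phic W)) * Pc W)
  have hσ0 : 0 < sigq S W := hsig.1
  have hσ1 : sigq S W < 1 := hsig.2
  have hRq : 0 < Rq R W := mul_pos (Real.exp_pos _) (hR _ _)
  have hE : 0 < Rq R W + Pc W := by linarith
  have ht2 := U0_sq W
  have ht1 := U0_ge_one W
  have husq : 0 ≤ ∑ k : Fin 3, (Uc Vd k) ^ 2 := Finset.sum_nonneg fun k _ => sq_nonneg _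
  have hcs : (∑ k : Fin 3, Uc W k * Uc Vd k) ^ 2
      ≤ (U0 W ^ 2 - 1) * ∑ k : Fin 3, (Uc Vd k) ^ 2 := by
    rw [ht2]
    simp only [Fin.sum_univ_three]
    nlinarith [sq_nonneg (Uc W 0 * Uc Vd 1 - Uc W 1 * Uc Vd 0),
      sq_nonneg (Uc W 0 * Uc Vd 2 - Uc W 2 * Uc Vd 0),
      sq_nonneg (Uc W 1 * Uc Vd 2 - Uc W 2 * Uc Vd 1)]
  rw [sum_sq_decomp] at hVd
  have hψ : 0 ≤ ∑ μ : Fin 4, (Psic Vd μ) ^ 2 := Finset.sum_nonneg fun μ _ => sq_nonneg _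
  by_cases hPu : 0 < (Pc Vd) ^ 2 + ∑ k : Fin 3, (Uc Vd k) ^ 2
  · have hGpos := quad_pos (U0 W) (Rq R W + Pc W) (sigq S W) (Pc Vd)
      (∑ k : Fin 3, Uc W k * Uc Vd k) (∑ k : Fin 3, (Uc Vd k) ^ 2)
      ht1 hE hσ0 hσ1 hcs husq hPu
    rw [J0, Qq_eq]
    have hA : 0 ≤ U0 W * (Sc Vd) ^ 2 := mul_nonneg (by linarith) (sq_nonneg _)
    have hB : 0 ≤ (1 / 2 : ℝ) * ((Phic Vd) ^ 2 + ∑ μ : Fin 4, (Psic Vd μ) ^ 2) := by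
      have := sq_nonneg (Phic Vd); linarith
    linarith
  · push_neg at hPu
    have hP0 : Pc Vd = 0 := by nlinarith [sq_nonneg (Pc Vd)]
    have hu0 : ∀ k, Uc Vd k = 0 := by
      intro k
      have h1 : (Uc Vd k) ^ 2 ≤ ∑ j : Fin 3, (Uc Vd j) ^ 2 :=
        Finset.single_le_sum (f := fun j => (Uc Vd j) ^ 2) (fun j _ => sq_nonneg _)
          (Finset.mem_univ k)
      nlinarith [sq_nonneg (Pc Vd), sq_nonneg (Uc Vd k)]
    have ha0 : (∑ k : Fin 3, Uc W k * Uc Vd k) = 0 := by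
      simp [Fin.sum_univ_three, hu0]
    have hus0 : (∑ k : Fin 3, (Uc Vd k) ^ 2) = 0 := by
      simp [Fin.sum_univ_three, hu0]
    rw [J0, hP0, ha0, hus0]
    have hrest : 0 < (Sc Vd) ^ 2 + ((Phic Vd) ^ 2 + ∑ μ : Fin 4, (Psic Vd μ) ^ 2) := by
      rw [hP0, hus0] at hVd; nlinarith
    have hA : (Sc Vd) ^ 2 ≤ U0 W * (Sc Vd) ^ 2 := by nlinarith [sq_nonneg (Sc Vd)]
    simp only [ne_eq, zero_pow, mul_zero, zero_div, add_zero, sub_zero, zero_sub, mul_zero]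
    ring_nf
    nlinarith [sq_nonneg (Phic Vd)]

set_option maxHeartbeats 1000000 in
/-- Uniform positive definiteness of `J̇⁰` over a compact set of backgrounds:
there is `C ∈ (0,1)`, depending only on the compact set `O2c ⊆ 𝒪`, with
`C|V̇|² ≤ J̇⁰(V̇,V̇) ≤ C⁻¹|V̇|²` for every background in `O2c` and every variation `V̇`. -/
theorem energy_current_uniform_positive_definite
    (R S : ℝ → ℝ → ℝ) (hEOS : GoodEOS R S)
    (O2c : Set St) (hcpt : IsCompact O2c) (hadm : O2c ⊆ adm) :
    ∃ C : ℝ, 0 < C ∧ C < 1 ∧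
      ∀ W ∈ O2c, ∀ Vd : St,
        C * (∑ i, (Vd i) ^ 2) ≤ J0 R S W Vd ∧ J0 R S W Vd ≤ C⁻¹ * (∑ i, (Vd i) ^ 2) := by
  rcases O2c.eq_empty_or_nonempty with hO | hO
  · exact ⟨1/2, by norm_num, by norm_num, by simp [hO]⟩
  have hRcont : Continuous fun p : ℝ × ℝ => R p.1 p.2 := hEOS.1.continuous
  have hScont : Continuous fun p : ℝ × ℝ => S p.1 p.2 := hEOS.2.1.continuous
  have hU0c : Continuous U0 := by
    unfold U0 Uc
    exact Real.continuous_sqrt.comp (by fun_prop)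
  have hRqc : Continuous (Rq R) := by
    unfold Rq Sc Pc Phic
    exact (Real.continuous_exp.comp (by fun_prop)).mul
      (hRcont.comp (Continuous.prodMk (continuous_apply (0 : Fin 10))
        ((Real.continuous_exp.comp (by fun_prop)).mul (continuous_apply (1 : Fin 10)))))
  have hsigc : Continuous (sigq S) := by
    unfold sigq Sc Pc Phic
    exact hScont.comp (Continuous.prodMk (continuous_apply (0 : Fin 10))
      ((Real.continuous_exp.comp (by fun_prop)).mul (continuous_apply (1 : Fin 10))))
  have hQqc : Continuous (Qq R S) := by
    unfold Qq Pc
    exact (hsigc.pow 2).mul (hRqc.add (continuous_apply (1 : Fin 10)))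
  have hQpos : ∀ W ∈ O2c, 0 < Qq R S W := by
    intro W hW
    have hP := (hadm hW).2
    have hsig := hEOS.2.2.2 (Sc W) (Real.exp (-(4 * Phic W)) * Pc W)
    have hRq : 0 < Rq R W := mul_pos (Real.exp_pos _) (hEOS.2.2.1 _ _)
    have hs0 : 0 < sigq S W := hsig.1
    rw [Qq_eq]
    exact mul_pos (pow_pos hs0 2) (by linarith)
  have hU0pos : ∀ W : St, 0 < U0 W := fun W => lt_of_lt_of_le zero_lt_one (U0_ge_one W)
  set Sph : Set St := {v : St | ∑ i, (v i) ^ 2 = 1} with hSphdef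
  have hSphC : IsCompact Sph := by
    have hcl : IsClosed Sph := isClosed_eq (by fun_prop) continuous_const
    have hbd : Bornology.IsBounded Sph := by
      refine (Metric.isBounded_closedBall (x := (0 : St)) (r := 1)).subset ?_
      intro v hv
      have hv' : ∑ i, (v i) ^ 2 = 1 := hv
      rw [Metric.mem_closedBall, dist_zero_right]
      rw [pi_norm_le_iff_of_nonneg zero_le_one]
      intro i
      have h1 : (v i) ^ 2 ≤ 1 := by
        have := Finset.single_le_sum (f := fun j => (v j) ^ 2)
          (fun j _ => sq_nonneg _) (Finset.mem_univ i)
        rw [hv'] at this; exact this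
      rw [Real.norm_eq_abs]
      nlinarith [abs_nonneg (v i), sq_abs (v i)]
    exact Metric.isCompact_of_isClosed_isBounded hcl hbd
  have hSphNe : Sph.Nonempty := by
    refine ⟨fun i => if i = 0 then 1 else 0, ?_⟩
    show ∑ i : Fin 10, ((if i = 0 then (1:ℝ) else 0)) ^ 2 = 1
    rw [sum10]
    norm_num [show (2:Fin 10) ≠ 0 by decide, show (3:Fin 10) ≠ 0 by decide,
      show (4:Fin 10) ≠ 0 by decide, show (5:Fin 10) ≠ 0 by decide,
      show (6:Fin 10) ≠ 0 by decide, show (7:Fin 10) ≠ 0 by decide,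
      show (8:Fin 10) ≠ 0 by decide, show (9:Fin 10) ≠ 0 by decide]
  have hScc : Continuous Sc := by unfold Sc; exact continuous_apply _
  have hPcc : Continuous Pc := by unfold Pc; exact continuous_apply _
  have hPhicc : Continuous Phic := by unfold Phic; exact continuous_apply _
  have hUcc : ∀ k : Fin 3, Continuous fun V : St => Uc V k := by
    intro k; unfold Uc; exact continuous_apply _
  have hPsicc : ∀ μ : Fin 4, Continuous fun V : St => Psic V μ := by
    intro μ; unfold Psic; exact continuous_apply _
  have hcont : ContinuousOn (fun p : St × St => J0 R S p.1 p.2) (O2c ×ˢ Sph) := by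
    intro p hp
    apply ContinuousAt.continuousWithinAt
    have h1 : Qq R S p.1 ≠ 0 := (hQpos p.1 hp.1).ne'
    have h2 : U0 p.1 ≠ 0 := (hU0pos p.1).ne'
    have h3 : (U0 p.1) ^ 2 ≠ 0 := pow_ne_zero _ h2
    have cU0 : ContinuousAt (fun q : St × St => U0 q.1) p :=
      (hU0c.comp continuous_fst).continuousAt
    have cQq : ContinuousAt (fun q : St × St => Qq R S q.1) p :=
      (hQqc.comp continuous_fst).continuousAt
    have cRq : ContinuousAt (fun q : St × St => Rq R q.1) p :=
      (hRqc.comp continuous_fst).continuousAt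
    have cPc1 : ContinuousAt (fun q : St × St => Pc q.1) p :=
      (hPcc.comp continuous_fst).continuousAt
    have cSc2 : ContinuousAt (fun q : St × St => Sc q.2) p :=
      (hScc.comp continuous_snd).continuousAt
    have cPc2 : ContinuousAt (fun q : St × St => Pc q.2) p :=
      (hPcc.comp continuous_snd).continuousAt
    have cPhic2 : ContinuousAt (fun q : St × St => Phic q.2) p :=
      (hPhicc.comp continuous_snd).continuousAt
    have cSum1 : ContinuousAt (fun q : St × St => ∑ k : Fin 3, Uc q.1 k * Uc q.2 k) p :=
      (continuous_finset_sum _ fun k _ =>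
        ((hUcc k).comp continuous_fst).mul ((hUcc k).comp continuous_snd)).continuousAt
    have cSum2 : ContinuousAt (fun q : St × St => ∑ k : Fin 3, (Uc q.2 k) ^ 2) p :=
      (continuous_finset_sum _ fun k _ =>
        ((hUcc k).comp continuous_snd).pow 2).continuousAt
    have cSumPsi : ContinuousAt (fun q : St × St => ∑ μ : Fin 4, (Psic q.2 μ) ^ 2) p :=
      (continuous_finset_sum _ fun μ _ =>
        ((hPsicc μ).comp continuous_snd).pow 2).continuousAt
    show ContinuousAt (fun q : St × St =>
      U0 q.1 * (Sc q.2) ^ 2 + (U0 q.1 / Qq R S q.1) * (Pc q.2) ^ 2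
        + 2 * ((∑ k : Fin 3, Uc q.1 k * Uc q.2 k) / U0 q.1) * Pc q.2
        + (Rq R q.1 + Pc q.1) * U0 q.1 *
            ((∑ k : Fin 3, (Uc q.2 k) ^ 2)
              - (∑ k : Fin 3, Uc q.1 k * Uc q.2 k) ^ 2 / (U0 q.1) ^ 2)
        + (1 / 2) * ((Phic q.2) ^ 2 + ∑ μ : Fin 4, (Psic q.2 μ) ^ 2)) p
    refine ContinuousAt.add (ContinuousAt.add (ContinuousAt.add (ContinuousAt.add
      (cU0.mul (cSc2.pow 2))
      ((cU0.div cQq h1).mul (cPc2.pow 2)))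
      ((continuousAt_const.mul (cSum1.div cU0 h2)).mul cPc2))
      (((cRq.add cPc1).mul cU0).mul
        (cSum2.sub ((cSum1.pow 2).div (cU0.pow 2) h3))))
      (continuousAt_const.mul ((cPhic2.pow 2).add cSumPsi))
  obtain ⟨pm, hpm, hmin⟩ := (hcpt.prod hSphC).exists_isMinOn (hO.prod hSphNe) hcont
  obtain ⟨pM, hpM, hmax⟩ := (hcpt.prod hSphC).exists_isMaxOn (hO.prod hSphNe) hcont
  set m := J0 R S pm.1 pm.2 with hmdef
  set M := J0 R S pM.1 pM.2 with hMdef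
  have hpm2 : ∑ i, (pm.2 i) ^ 2 = 1 := hpm.2
  have hm : 0 < m := J0_pos R S hEOS pm.1 (hadm hpm.1).2 pm.2 (by rw [hpm2]; norm_num)
  have hmM : m ≤ M := isMinOn_iff.mp hmin _ hpM
  have hM1 : (1:ℝ) < 1 + M := by linarith
  set C := min m (1 + M)⁻¹ with hCdef
  have hC0 : 0 < C := lt_min hm (by positivity)
  have hCm : C ≤ m := min_le_left _ _
  have hCM : M ≤ C⁻¹ := by
    have h1 : C ≤ (1 + M)⁻¹ := min_le_right _ _
    have h2 := inv_anti₀ hC0 h1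
    rw [inv_inv] at h2
    linarith
  refine ⟨C, hC0, lt_of_le_of_lt (min_le_right _ _) (inv_lt_one_of_one_lt₀ hM1), ?_⟩
  intro W hW Vd
  have hsum_nonneg : 0 ≤ ∑ i, (Vd i) ^ 2 := Finset.sum_nonneg fun i _ => sq_nonneg _
  rcases eq_or_lt_of_le hsum_nonneg with h0 | hpos
  · have hz : Vd = (0 : ℝ) • Vd := by
      funext i
      have h1 : (Vd i) ^ 2 ≤ 0 := by
        have := Finset.single_le_sum (f := fun j => (Vd j) ^ 2)
          (fun j _ => sq_nonneg _) (Finset.mem_univ i)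
        rw [← h0] at this; exact this
      have h2 : Vd i = 0 := by nlinarith [sq_nonneg (Vd i)]
      simp [h2]
    have hJ0 : J0 R S W Vd = 0 := by
      conv_lhs => rw [hz]
      rw [J0_smul]; ring
    have hs : ∑ i, (Vd i) ^ 2 = 0 := h0.symm
    rw [hJ0, hs]
    norm_num
  · set r := Real.sqrt (∑ i, (Vd i) ^ 2) with hrdef
    have hr : 0 < r := Real.sqrt_pos.mpr hpos
    have hr2 : r ^ 2 = ∑ i, (Vd i) ^ 2 := Real.sq_sqrt hsum_nonneg
    set Vd' := r⁻¹ • Vd with hVd'def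
    have hVdeq : Vd = r • Vd' := by
      rw [hVd'def, smul_smul, mul_inv_cancel₀ hr.ne', one_smul]
    have hsum' : ∑ i, (Vd' i) ^ 2 = 1 := by
      simp only [hVd'def, Pi.smul_apply, smul_eq_mul, mul_pow, ← Finset.mul_sum]
      rw [← hr2]
      field_simp
    have hmem : (W, Vd') ∈ O2c ×ˢ Sph := ⟨hW, hsum'⟩
    have hlow : m ≤ J0 R S W Vd' := isMinOn_iff.mp hmin (W, Vd') hmem
    have hup : J0 R S W Vd' ≤ M := isMaxOn_iff.mp hmax (W, Vd') hmem
    have hJ : J0 R S W Vd = r ^ 2 * J0 R S W Vd' := by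
      conv_lhs => rw [hVdeq]
      exact J0_smul R S W Vd' r
    constructor
    · rw [hJ, ← hr2]
      nlinarith [mul_le_mul_of_nonneg_left (hCm.trans hlow) (sq_nonneg r)]
    · rw [hJ, ← hr2]
      nlinarith [mul_le_mul_of_nonneg_left (hup.trans hCM) (sq_nonneg r)]


end EN
end
end

section
/- Divergence identity for the energy current (lower-order property): Let Ṽ be a C¹ background and let V̇ be a C¹ solution of the equations of variation defined by Ṽ with inhomogeneous terms (f, g, h⁽¹⁾, h⁽²⁾, h⁽³⁾, l⁽⁰⁾, …, l⁽⁴⁾), and let J̇ be the energy current of V̇ with coefficients defined by Ṽ. Then ∂_μ J̇^μ = (∂_μŨ^μ)Ṡ² + ∂_μ(Ũ^μ/Q̃)Ṗ² + 2∂₀(Ũ_k/Ũ⁰)U̇^kṖ + ∂_μ[(R̃+P̃)Ũ^μ][U̇^kU̇_k − (Ũ_kU̇^k)²/(Ũ⁰)²] − 2Ũ_kU̇^k(R̃+P̃)(Ũ^μ/Ũ⁰)∂_μ(Ũ_j/Ũ⁰)U̇^j + 2Ṡf + 2Ṗg/Q̃ + 2U̇_k h⁽ᵏ⁾ − 2Ũ_j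 h⁽ʲ⁾Ũ_kU̇^k/(Ũ⁰)² − ψ̇₀ l⁽⁰⁾ + ψ̇_k l⁽ᵏ⁾ + φ̇ l⁽⁴⁾; in particular, the right-hand side contains no derivatives of the variation V̇. -/
noncomputable section
open MeasureTheory Real Set Filter Metric

namespace EN

/-! ### Auxiliary lemmas for the divergence identity -/

theorem pd_congr {f g : Spt → ℝ} (μ : Fin 4) (x : Spt) (h : ∀ y, f y = g y) :
    pd μ f x = pd μ g x := by
  rw [pd, pd, funext h]

theorem pd_add {f g : Spt → ℝ} {x : Spt} (μ : Fin 4) (hf : DifferentiableAt ℝ f x)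
    (hg : DifferentiableAt ℝ g x) :
    pd μ (fun y => f y + g y) x = pd μ f x + pd μ g x := by
  simp [pd, fderiv_fun_add hf hg]

theorem pd_sub {f g : Spt → ℝ} {x : Spt} (μ : Fin 4) (hf : DifferentiableAt ℝ f x)
    (hg : DifferentiableAt ℝ g x) :
    pd μ (fun y => f y - g y) x = pd μ f x - pd μ g x := by
  simp [pd, fderiv_fun_sub hf hg]

theorem pd_mul {f g : Spt → ℝ} {x : Spt} (μ : Fin 4) (hf : DifferentiableAt ℝ f x)
    (hg : DifferentiableAt ℝ g x) :
    pd μ (fun y => f y * g y) x = pd μ f x * g x + f x * pd μ g x := by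
  simp [pd, fderiv_fun_mul hf hg]; ring

theorem pd_const (μ : Fin 4) (x : Spt) (c : ℝ) : pd μ (fun _ => c) x = 0 := by
  simp [pd]

theorem pd_const_mul {f : Spt → ℝ} {x : Spt} (μ : Fin 4) (c : ℝ)
    (hf : DifferentiableAt ℝ f x) :
    pd μ (fun y => c * f y) x = c * pd μ f x := by
  simp [pd, fderiv_const_mul hf]

theorem pd_sq {f : Spt → ℝ} {x : Spt} (μ : Fin 4) (hf : DifferentiableAt ℝ f x) :
    pd μ (fun y => f y ^ 2) x = 2 * f x * pd μ f x := by
  have h : ∀ y, f y ^ 2 = f y * f y := fun y => sq (f y)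
  rw [pd_congr μ x h, pd_mul μ hf hf]; ring

theorem pd_inv {g : Spt → ℝ} {x : Spt} (μ : Fin 4) (hg : DifferentiableAt ℝ g x)
    (hne : g x ≠ 0) :
    pd μ (fun y => (g y)⁻¹) x = -pd μ g x / g x ^ 2 := by
  have h : HasFDerivAt (fun y => (g y)⁻¹) (-(g x ^ 2)⁻¹ • fderiv ℝ g x) x :=
    (hasDerivAt_inv hne).comp_hasFDerivAt x hg.hasFDerivAt
  rw [pd, h.fderiv]
  simp [pd]; ring

theorem pd_div {f g : Spt → ℝ} {x : Spt} (μ : Fin 4) (hf : DifferentiableAt ℝ f x)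
    (hg : DifferentiableAt ℝ g x) (hne : g x ≠ 0) :
    pd μ (fun y => f y / g y) x = (pd μ f x * g x - f x * pd μ g x) / g x ^ 2 := by
  have h : ∀ y, f y / g y = f y * (g y)⁻¹ := fun y => div_eq_mul_inv _ _
  rw [pd_congr μ x h, pd_mul μ hf (hg.fun_inv hne), pd_inv μ hg hne]
  field_simp; ring

theorem pd_sqrt {f : Spt → ℝ} {x : Spt} (μ : Fin 4) (hf : DifferentiableAt ℝ f x)
    (hpos : 0 < f x) :
    pd μ (fun y => Real.sqrt (f y)) x = pd μ f x / (2 * Real.sqrt (f x)) := by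
  have h : HasFDerivAt (fun y => Real.sqrt (f y)) ((1 / (2 * Real.sqrt (f x))) • fderiv ℝ f x) x :=
    hf.hasFDerivAt.sqrt hpos.ne'
  rw [pd, h.fderiv]
  simp [pd]; ring

theorem U4_zero (V : St) : U4 V 0 = U0 V := rfl
theorem U4_one (V : St) : U4 V 1 = Uc V 0 := rfl
theorem U4_two (V : St) : U4 V 2 = Uc V 1 := rfl
theorem U4_three (V : St) : U4 V 3 = Uc V 2 := rfl
theorem fs0 : (0 : Fin 3).succ = 1 := rfl
theorem fs1 : (1 : Fin 3).succ = 2 := rfl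
theorem fs2 : (2 : Fin 3).succ = 3 := rfl

theorem diffAt_div {f g : Spt → ℝ} {x : Spt} (hf : DifferentiableAt ℝ f x)
    (hg : DifferentiableAt ℝ g x) (hne : g x ≠ 0) :
    DifferentiableAt ℝ (fun y => f y / g y) x := by
  simpa only [div_eq_mul_inv] using hf.fun_mul (hg.fun_inv hne)

set_option maxHeartbeats 4000000 in
set_option maxRecDepth 100000 in
/-- **Divergence identity for the energy current.** If `Ṽ` is a `C¹`
background with values in the admissible set and `V̇` is a `C¹` solution of the equations of
variation defined by `Ṽ` with inhomogeneous terms `(f,g,h⁽ʲ⁾,l⁽⁰⁾,l⁽ʲ⁾,l⁽⁴⁾)`, then the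
divergence `∂_μ J̇^μ` of the energy current equals the stated expression, which contains no
derivatives of the variation `V̇`. -/
theorem energy_current_divergence_identity
    (R S : ℝ → ℝ → ℝ) (hEOS : GoodEOS R S)
    (W Vd : Spt → St) (hW : ContDiff ℝ 1 W) (hVd : ContDiff ℝ 1 Vd)
    (hWadm : ∀ x, W x ∈ adm)
    (f g : Spt → ℝ) (h : Spt → Fin 3 → ℝ) (l0 : Spt → ℝ) (lj : Spt → Fin 3 → ℝ) (l4 : Spt → ℝ)
    (hsol : IsEOVSol R S W Vd f g h l0 lj l4 Set.univ) :
    ∀ x : Spt,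
      divJ R S W Vd x =
        (∑ μ, pd μ (fun y => U4 (W y) μ) x) * (Sc (Vd x)) ^ 2
        + (∑ μ, pd μ (fun y => U4 (W y) μ / Qq R S (W y)) x) * (Pc (Vd x)) ^ 2
        + 2 * (∑ k : Fin 3, pd 0 (fun y => Uc (W y) k / U0 (W y)) x * Uc (Vd x) k) * Pc (Vd x)
        + (∑ μ, pd μ (fun y => (Rq R (W y) + Pc (W y)) * U4 (W y) μ) x)
            * ((∑ k : Fin 3, (Uc (Vd x) k) ^ 2)
                - (∑ k : Fin 3, Uc (W x) k * Uc (Vd x) k) ^ 2 / (U0 (W x)) ^ 2)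
        - 2 * (∑ k : Fin 3, Uc (W x) k * Uc (Vd x) k) * (Rq R (W x) + Pc (W x))
            * (∑ μ, (U4 (W x) μ / U0 (W x))
                * (∑ j : Fin 3, pd μ (fun y => Uc (W y) j / U0 (W y)) x * Uc (Vd x) j))
        + 2 * Sc (Vd x) * f x
        + 2 * Pc (Vd x) * g x / Qq R S (W x)
        + 2 * (∑ k : Fin 3, Uc (Vd x) k * h x k)
        - 2 * (∑ j : Fin 3, Uc (W x) j * h x j)
            * (∑ k : Fin 3, Uc (W x) k * Uc (Vd x) k) / (U0 (W x)) ^ 2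
        - Psic (Vd x) 0 * l0 x
        + (∑ k : Fin 3, Psic (Vd x) k.succ * lj x k)
        + Phic (Vd x) * l4 x := by
  intro x
  have hW1 : Differentiable ℝ W := hW.differentiable one_ne_zero
  have hV1 : Differentiable ℝ Vd := hVd.differentiable one_ne_zero
  have hWc : ∀ i : Fin 10, Differentiable ℝ (fun y => W y i) := differentiable_pi.mp hW1
  have hVc : ∀ i : Fin 10, Differentiable ℝ (fun y => Vd y i) := differentiable_pi.mp hV1
  have ds : Differentiable ℝ (fun y => Sc (Vd y)) := hVc 0
  have dp : Differentiable ℝ (fun y => Pc (Vd y)) := hVc 1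
  have dv0 : Differentiable ℝ (fun y => Uc (Vd y) 0) := hVc 2
  have dv1 : Differentiable ℝ (fun y => Uc (Vd y) 1) := hVc 3
  have dv2 : Differentiable ℝ (fun y => Uc (Vd y) 2) := hVc 4
  have dph : Differentiable ℝ (fun y => Phic (Vd y)) := hVc 5
  have dps0 : Differentiable ℝ (fun y => Psic (Vd y) 0) := hVc 6
  have dps1 : Differentiable ℝ (fun y => Psic (Vd y) 1) := hVc 7
  have dps2 : Differentiable ℝ (fun y => Psic (Vd y) 2) := hVc 8
  have dps3 : Differentiable ℝ (fun y => Psic (Vd y) 3) := hVc 9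
  have du0 : Differentiable ℝ (fun y => Uc (W y) 0) := hWc 2
  have du1 : Differentiable ℝ (fun y => Uc (W y) 1) := hWc 3
  have du2 : Differentiable ℝ (fun y => Uc (W y) 2) := hWc 4
  have dSw : Differentiable ℝ (fun y => Sc (W y)) := hWc 0
  have dPw : Differentiable ℝ (fun y => Pc (W y)) := hWc 1
  have dphW : Differentiable ℝ (fun y => Phic (W y)) := hWc 5
  have hU0eq : ∀ V : St, U0 V = Real.sqrt (1 + (Uc V 0 ^ 2 + (Uc V 1 ^ 2 + Uc V 2 ^ 2))) := by
    intro V; rw [U0, Fin.sum_univ_three]; ring_nf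
  have dnorm : Differentiable ℝ (fun y => 1 + (Uc (W y) 0 ^ 2 + (Uc (W y) 1 ^ 2 + Uc (W y) 2 ^ 2))) :=
    (differentiable_const 1).fun_add ((du0.fun_pow 2).fun_add ((du1.fun_pow 2).fun_add (du2.fun_pow 2)))
  have hnormpos : ∀ y, (0:ℝ) < 1 + (Uc (W y) 0 ^ 2 + (Uc (W y) 1 ^ 2 + Uc (W y) 2 ^ 2)) := by
    intro y; positivity
  have dA : Differentiable ℝ (fun y => U0 (W y)) := by
    have he : (fun y => U0 (W y)) = fun y => Real.sqrt (1 + (Uc (W y) 0 ^ 2 + (Uc (W y) 1 ^ 2 + Uc (W y) 2 ^ 2))) :=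
      funext fun y => hU0eq (W y)
    rw [he]; exact fun y => ((dnorm y).sqrt (hnormpos y).ne')
  have hApos : 0 < U0 (W x) := by
    rw [hU0eq]; exact Real.sqrt_pos.mpr (hnormpos x)
  have hAne : U0 (W x) ≠ 0 := hApos.ne'
  have hRd : Differentiable ℝ (fun pq : ℝ × ℝ => R pq.1 pq.2) := (hEOS.1).differentiable (by simp)
  have hSd : Differentiable ℝ (fun pq : ℝ × ℝ => S pq.1 pq.2) := (hEOS.2.1).differentiable (by simp)
  have darg : Differentiable ℝ (fun y => (Sc (W y), Real.exp (-(4 * Phic (W y))) * Pc (W y))) :=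
    dSw.prodMk ((Real.differentiable_exp.comp ((dphW.const_mul 4).fun_neg)).mul dPw)
  have dRq : Differentiable ℝ (fun y => Rq R (W y)) :=
    (Real.differentiable_exp.comp (dphW.const_mul 4)).fun_mul (hRd.comp darg)
  have dQ : Differentiable ℝ (fun y => Qq R S (W y)) :=
    (((hSd.comp darg).fun_pow 2).fun_mul (dRq.add dPw))
  have hQpos : 0 < Qq R S (W x) :=
    mul_pos (pow_pos (hEOS.2.2.2 _ _).1 2)
      (add_pos (mul_pos (Real.exp_pos _) (hEOS.2.2.1 _ _)) (hWadm x).2)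
  have hQne : Qq R S (W x) ≠ 0 := hQpos.ne'
  have hdU0 : ∀ μ : Fin 4, pd μ (fun y => U0 (W y)) x =
      (Uc (W x) 0 * pd μ (fun y => Uc (W y) 0) x + Uc (W x) 1 * pd μ (fun y => Uc (W y) 1) x
        + Uc (W x) 2 * pd μ (fun y => Uc (W y) 2) x) / U0 (W x) := by
    intro μ
    have h1 : pd μ (fun y => U0 (W y)) x
        = pd μ (fun y => Real.sqrt (1 + (Uc (W y) 0 ^ 2 + (Uc (W y) 1 ^ 2 + Uc (W y) 2 ^ 2)))) x :=
      pd_congr μ x (fun y => hU0eq (W y))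
    rw [h1, pd_sqrt μ (dnorm x) (hnormpos x),
      pd_add μ (differentiableAt_const 1) (((du0 x).fun_pow 2).fun_add (((du1 x).fun_pow 2).fun_add ((du2 x).fun_pow 2))),
      pd_add μ ((du0 x).fun_pow 2) (((du1 x).fun_pow 2).fun_add ((du2 x).fun_pow 2)),
      pd_add μ ((du1 x).fun_pow 2) ((du2 x).fun_pow 2),
      pd_sq μ (du0 x), pd_sq μ (du1 x), pd_sq μ (du2 x), pd_const, ← hU0eq (W x)]
    have h2 : U0 (W x) ≠ 0 := hAne
    field_simp
    ring
  have ha2 : U0 (W x) ^ 2 = 1 + (Uc (W x) 0 ^ 2 + (Uc (W x) 1 ^ 2 + Uc (W x) 2 ^ 2)) := by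
    rw [hU0eq]; exact Real.sq_sqrt (by positivity)
  simp only [divJ, Fin.sum_univ_three, Fin.sum_univ_four, U4_zero, U4_one, U4_two, U4_three,
    fs0, fs1, fs2]
  rw [show pd 0 (fun y => J0 R S (W y) (Vd y)) x = pd 0 (fun y => U0 (W y) * (Sc (Vd y)) ^ 2 + (U0 (W y) / Qq R S (W y)) * (Pc (Vd y)) ^ 2 + (2 * ((Uc (W y) 0 * Uc (Vd y) 0 + Uc (W y) 1 * Uc (Vd y) 1 + Uc (W y) 2 * Uc (Vd y) 2) / U0 (W y))) * Pc (Vd y) + ((Rq R (W y) + Pc (W y)) * U0 (W y)) * ((Uc (Vd y) 0) ^ 2 + (Uc (Vd y) 1) ^ 2 + (Uc (Vd y) 2) ^ 2 - (Uc (W y) 0 * Uc (Vd y) 0 + Uc (W y) 1 * Uc (Vd y) 1 + Uc (W y) 2 * Uc (Vd y) 2) ^ 2 / (U0 (W y)) ^ 2) + 1 / 2 * ((Phic (Vd y)) ^ 2 + ((Psic (Vd y) 0) ^ 2 + (Psic (Vd y) 1) ^ 2 + (Psic (Vd y) 2) ^ 2 + (Psic (Vd y) 3) ^ 2))) x from pd_congr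 0 x (fun y => by simp only [J0, Fin.sum_univ_three, Fin.sum_univ_four]; try ring)]
  rw [show pd 1 (fun y => Jsp R S (W y) (Vd y) 0) x = pd 1 (fun y => Uc (W y) 0 * (Sc (Vd y)) ^ 2 + (Uc (W y) 0 / Qq R S (W y)) * (Pc (Vd y)) ^ 2 + (2 * Uc (Vd y) 0) * Pc (Vd y) + ((Rq R (W y) + Pc (W y)) * Uc (W y) 0) * ((Uc (Vd y) 0) ^ 2 + (Uc (Vd y) 1) ^ 2 + (Uc (Vd y) 2) ^ 2 - (Uc (W y) 0 * Uc (Vd y) 0 + Uc (W y) 1 * Uc (Vd y) 1 + Uc (W y) 2 * Uc (Vd y) 2) ^ 2 / (U0 (W y)) ^ 2) - Psic (Vd y) 0 * Psic (Vd y) 1) x from pd_congr 1 x (fun y => by simp only [Jsp, Fin.sum_univ_three, Fin.sum_univ_four, fs0, fs1, fs2]; try ring)]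
  rw [show pd 2 (fun y => Jsp R S (W y) (Vd y) 1) x = pd 2 (fun y => Uc (W y) 1 * (Sc (Vd y)) ^ 2 + (Uc (W y) 1 / Qq R S (W y)) * (Pc (Vd y)) ^ 2 + (2 * Uc (Vd y) 1) * Pc (Vd y) + ((Rq R (W y) + Pc (W y)) * Uc (W y) 1) * ((Uc (Vd y) 0) ^ 2 + (Uc (Vd y) 1) ^ 2 + (Uc (Vd y) 2) ^ 2 - (Uc (W y) 0 * Uc (Vd y) 0 + Uc (W y) 1 * Uc (Vd y) 1 + Uc (W y) 2 * Uc (Vd y) 2) ^ 2 / (U0 (W y)) ^ 2) - Psic (Vd y) 0 * Psic (Vd y) 2) x from pd_congr 2 x (fun y => by simp only [Jsp, Fin.sum_univ_three, Fin.sum_univ_four, fs0, fs1, fs2]; try ring)]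
  rw [show pd 3 (fun y => Jsp R S (W y) (Vd y) 2) x = pd 3 (fun y => Uc (W y) 2 * (Sc (Vd y)) ^ 2 + (Uc (W y) 2 / Qq R S (W y)) * (Pc (Vd y)) ^ 2 + (2 * Uc (Vd y) 2) * Pc (Vd y) + ((Rq R (W y) + Pc (W y)) * Uc (W y) 2) * ((Uc (Vd y) 0) ^ 2 + (Uc (Vd y) 1) ^ 2 + (Uc (Vd y) 2) ^ 2 - (Uc (W y) 0 * Uc (Vd y) 0 + Uc (W y) 1 * Uc (Vd y) 1 + Uc (W y) 2 * Uc (Vd y) 2) ^ 2 / (U0 (W y)) ^ 2) - Psic (Vd y) 0 * Psic (Vd y) 3) x from pd_congr 3 x (fun y => by simp only [Jsp, Fin.sum_univ_three, Fin.sum_univ_four, fs0, fs1, fs2]; try ring)]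
  rw [pd_add 0 (((((dA x).fun_mul ((ds x).fun_pow 2)).fun_add ((diffAt_div (dA x) (dQ x) hQne).fun_mul ((dp x).fun_pow 2))).fun_add (((diffAt_div ((((du0 x).fun_mul (dv0 x)).fun_add ((du1 x).fun_mul (dv1 x))).fun_add ((du2 x).fun_mul (dv2 x))) (dA x) hAne).const_mul (2 : ℝ)).fun_mul (dp x))).fun_add ((((dRq x).fun_add (dPw x)).fun_mul (dA x)).fun_mul (((((dv0 x).fun_pow 2).fun_add ((dv1 x).fun_pow 2)).fun_add ((dv2 x).fun_pow 2)).fun_sub (diffAt_div (((((du0 x).fun_mul (dv0 x)).fun_add ((du1 x).fun_mul (dv1 x))).fun_add ((du2 x).fun_mul (dv2 x))).fun_pow 2) ((dA x).fun_pow 2) (pow_ne_zero 2 hAne))))) ((((dph x).fun_pow 2).fun_add (((((dps0 x).fun_pow 2).fun_add ((dps1 x).fun_pow 2)).fun_add ((dps2 x).fun_pow 2)).fun_add ((dps3 x).fun_pow 2))).const_mul (1 / 2 : ℝ)),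
    pd_add 0 ((((dA x).fun_mul ((ds x).fun_pow 2)).fun_add ((diffAt_div (dA x) (dQ x) hQne).fun_mul ((dp x).fun_pow 2))).fun_add (((diffAt_div ((((du0 x).fun_mul (dv0 x)).fun_add ((du1 x).fun_mul (dv1 x))).fun_add ((du2 x).fun_mul (dv2 x))) (dA x) hAne).const_mul (2 : ℝ)).fun_mul (dp x))) ((((dRq x).fun_add (dPw x)).fun_mul (dA x)).fun_mul (((((dv0 x).fun_pow 2).fun_add ((dv1 x).fun_pow 2)).fun_add ((dv2 x).fun_pow 2)).fun_sub (diffAt_div (((((du0 x).fun_mul (dv0 x)).fun_add ((du1 x).fun_mul (dv1 x))).fun_add ((du2 x).fun_mul (dv2 x))).fun_pow 2) ((dA x).fun_pow 2) (pow_ne_zero 2 hAne)))),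
    pd_sub 1 (((((du0 x).fun_mul ((ds x).fun_pow 2)).fun_add ((diffAt_div (du0 x) (dQ x) hQne).fun_mul ((dp x).fun_pow 2))).fun_add (((dv0 x).const_mul (2 : ℝ)).fun_mul (dp x))).fun_add ((((dRq x).fun_add (dPw x)).fun_mul (du0 x)).fun_mul (((((dv0 x).fun_pow 2).fun_add ((dv1 x).fun_pow 2)).fun_add ((dv2 x).fun_pow 2)).fun_sub (diffAt_div (((((du0 x).fun_mul (dv0 x)).fun_add ((du1 x).fun_mul (dv1 x))).fun_add ((du2 x).fun_mul (dv2 x))).fun_pow 2) ((dA x).fun_pow 2) (pow_ne_zero 2 hAne))))) ((dps0 x).fun_mul (dps1 x)),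
    pd_sub 2 (((((du1 x).fun_mul ((ds x).fun_pow 2)).fun_add ((diffAt_div (du1 x) (dQ x) hQne).fun_mul ((dp x).fun_pow 2))).fun_add (((dv1 x).const_mul (2 : ℝ)).fun_mul (dp x))).fun_add ((((dRq x).fun_add (dPw x)).fun_mul (du1 x)).fun_mul (((((dv0 x).fun_pow 2).fun_add ((dv1 x).fun_pow 2)).fun_add ((dv2 x).fun_pow 2)).fun_sub (diffAt_div (((((du0 x).fun_mul (dv0 x)).fun_add ((du1 x).fun_mul (dv1 x))).fun_add ((du2 x).fun_mul (dv2 x))).fun_pow 2) ((dA x).fun_pow 2) (pow_ne_zero 2 hAne))))) ((dps0 x).fun_mul (dps2 x)),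
    pd_sub 3 (((((du2 x).fun_mul ((ds x).fun_pow 2)).fun_add ((diffAt_div (du2 x) (dQ x) hQne).fun_mul ((dp x).fun_pow 2))).fun_add (((dv2 x).const_mul (2 : ℝ)).fun_mul (dp x))).fun_add ((((dRq x).fun_add (dPw x)).fun_mul (du2 x)).fun_mul (((((dv0 x).fun_pow 2).fun_add ((dv1 x).fun_pow 2)).fun_add ((dv2 x).fun_pow 2)).fun_sub (diffAt_div (((((du0 x).fun_mul (dv0 x)).fun_add ((du1 x).fun_mul (dv1 x))).fun_add ((du2 x).fun_mul (dv2 x))).fun_pow 2) ((dA x).fun_pow 2) (pow_ne_zero 2 hAne))))) ((dps0 x).fun_mul (dps3 x)),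
    pd_add 1 ((((du0 x).fun_mul ((ds x).fun_pow 2)).fun_add ((diffAt_div (du0 x) (dQ x) hQne).fun_mul ((dp x).fun_pow 2))).fun_add (((dv0 x).const_mul (2 : ℝ)).fun_mul (dp x))) ((((dRq x).fun_add (dPw x)).fun_mul (du0 x)).fun_mul (((((dv0 x).fun_pow 2).fun_add ((dv1 x).fun_pow 2)).fun_add ((dv2 x).fun_pow 2)).fun_sub (diffAt_div (((((du0 x).fun_mul (dv0 x)).fun_add ((du1 x).fun_mul (dv1 x))).fun_add ((du2 x).fun_mul (dv2 x))).fun_pow 2) ((dA x).fun_pow 2) (pow_ne_zero 2 hAne))))]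
  rw [pd_add 2 ((((du1 x).fun_mul ((ds x).fun_pow 2)).fun_add ((diffAt_div (du1 x) (dQ x) hQne).fun_mul ((dp x).fun_pow 2))).fun_add (((dv1 x).const_mul (2 : ℝ)).fun_mul (dp x))) ((((dRq x).fun_add (dPw x)).fun_mul (du1 x)).fun_mul (((((dv0 x).fun_pow 2).fun_add ((dv1 x).fun_pow 2)).fun_add ((dv2 x).fun_pow 2)).fun_sub (diffAt_div (((((du0 x).fun_mul (dv0 x)).fun_add ((du1 x).fun_mul (dv1 x))).fun_add ((du2 x).fun_mul (dv2 x))).fun_pow 2) ((dA x).fun_pow 2) (pow_ne_zero 2 hAne)))),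
    pd_add 3 ((((du2 x).fun_mul ((ds x).fun_pow 2)).fun_add ((diffAt_div (du2 x) (dQ x) hQne).fun_mul ((dp x).fun_pow 2))).fun_add (((dv2 x).const_mul (2 : ℝ)).fun_mul (dp x))) ((((dRq x).fun_add (dPw x)).fun_mul (du2 x)).fun_mul (((((dv0 x).fun_pow 2).fun_add ((dv1 x).fun_pow 2)).fun_add ((dv2 x).fun_pow 2)).fun_sub (diffAt_div (((((du0 x).fun_mul (dv0 x)).fun_add ((du1 x).fun_mul (dv1 x))).fun_add ((du2 x).fun_mul (dv2 x))).fun_pow 2) ((dA x).fun_pow 2) (pow_ne_zero 2 hAne)))),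
    pd_mul 1 (((dRq x).fun_add (dPw x)).fun_mul (du0 x)) (((((dv0 x).fun_pow 2).fun_add ((dv1 x).fun_pow 2)).fun_add ((dv2 x).fun_pow 2)).fun_sub (diffAt_div (((((du0 x).fun_mul (dv0 x)).fun_add ((du1 x).fun_mul (dv1 x))).fun_add ((du2 x).fun_mul (dv2 x))).fun_pow 2) ((dA x).fun_pow 2) (pow_ne_zero 2 hAne))),
    pd_mul 2 (((dRq x).fun_add (dPw x)).fun_mul (du1 x)) (((((dv0 x).fun_pow 2).fun_add ((dv1 x).fun_pow 2)).fun_add ((dv2 x).fun_pow 2)).fun_sub (diffAt_div (((((du0 x).fun_mul (dv0 x)).fun_add ((du1 x).fun_mul (dv1 x))).fun_add ((du2 x).fun_mul (dv2 x))).fun_pow 2) ((dA x).fun_pow 2) (pow_ne_zero 2 hAne))),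
    pd_mul 3 (((dRq x).fun_add (dPw x)).fun_mul (du2 x)) (((((dv0 x).fun_pow 2).fun_add ((dv1 x).fun_pow 2)).fun_add ((dv2 x).fun_pow 2)).fun_sub (diffAt_div (((((du0 x).fun_mul (dv0 x)).fun_add ((du1 x).fun_mul (dv1 x))).fun_add ((du2 x).fun_mul (dv2 x))).fun_pow 2) ((dA x).fun_pow 2) (pow_ne_zero 2 hAne))),
    pd_mul 0 (((dRq x).fun_add (dPw x)).fun_mul (dA x)) (((((dv0 x).fun_pow 2).fun_add ((dv1 x).fun_pow 2)).fun_add ((dv2 x).fun_pow 2)).fun_sub (diffAt_div (((((du0 x).fun_mul (dv0 x)).fun_add ((du1 x).fun_mul (dv1 x))).fun_add ((du2 x).fun_mul (dv2 x))).fun_pow 2) ((dA x).fun_pow 2) (pow_ne_zero 2 hAne)))]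
  rw [pd_add 0 (((dA x).fun_mul ((ds x).fun_pow 2)).fun_add ((diffAt_div (dA x) (dQ x) hQne).fun_mul ((dp x).fun_pow 2))) (((diffAt_div ((((du0 x).fun_mul (dv0 x)).fun_add ((du1 x).fun_mul (dv1 x))).fun_add ((du2 x).fun_mul (dv2 x))) (dA x) hAne).const_mul (2 : ℝ)).fun_mul (dp x)),
    pd_sub 0 ((((dv0 x).fun_pow 2).fun_add ((dv1 x).fun_pow 2)).fun_add ((dv2 x).fun_pow 2)) (diffAt_div (((((du0 x).fun_mul (dv0 x)).fun_add ((du1 x).fun_mul (dv1 x))).fun_add ((du2 x).fun_mul (dv2 x))).fun_pow 2) ((dA x).fun_pow 2) (pow_ne_zero 2 hAne)),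
    pd_sub 1 ((((dv0 x).fun_pow 2).fun_add ((dv1 x).fun_pow 2)).fun_add ((dv2 x).fun_pow 2)) (diffAt_div (((((du0 x).fun_mul (dv0 x)).fun_add ((du1 x).fun_mul (dv1 x))).fun_add ((du2 x).fun_mul (dv2 x))).fun_pow 2) ((dA x).fun_pow 2) (pow_ne_zero 2 hAne)),
    pd_sub 2 ((((dv0 x).fun_pow 2).fun_add ((dv1 x).fun_pow 2)).fun_add ((dv2 x).fun_pow 2)) (diffAt_div (((((du0 x).fun_mul (dv0 x)).fun_add ((du1 x).fun_mul (dv1 x))).fun_add ((du2 x).fun_mul (dv2 x))).fun_pow 2) ((dA x).fun_pow 2) (pow_ne_zero 2 hAne)),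
    pd_sub 3 ((((dv0 x).fun_pow 2).fun_add ((dv1 x).fun_pow 2)).fun_add ((dv2 x).fun_pow 2)) (diffAt_div (((((du0 x).fun_mul (dv0 x)).fun_add ((du1 x).fun_mul (dv1 x))).fun_add ((du2 x).fun_mul (dv2 x))).fun_pow 2) ((dA x).fun_pow 2) (pow_ne_zero 2 hAne)),
    pd_const_mul 0 (1 / 2 : ℝ) (((dph x).fun_pow 2).fun_add (((((dps0 x).fun_pow 2).fun_add ((dps1 x).fun_pow 2)).fun_add ((dps2 x).fun_pow 2)).fun_add ((dps3 x).fun_pow 2)))]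
  rw [pd_mul 0 ((diffAt_div ((((du0 x).fun_mul (dv0 x)).fun_add ((du1 x).fun_mul (dv1 x))).fun_add ((du2 x).fun_mul (dv2 x))) (dA x) hAne).const_mul (2 : ℝ)) (dp x),
    pd_add 1 (((du0 x).fun_mul ((ds x).fun_pow 2)).fun_add ((diffAt_div (du0 x) (dQ x) hQne).fun_mul ((dp x).fun_pow 2))) (((dv0 x).const_mul (2 : ℝ)).fun_mul (dp x)),
    pd_add 2 (((du1 x).fun_mul ((ds x).fun_pow 2)).fun_add ((diffAt_div (du1 x) (dQ x) hQne).fun_mul ((dp x).fun_pow 2))) (((dv1 x).const_mul (2 : ℝ)).fun_mul (dp x)),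
    pd_add 3 (((du2 x).fun_mul ((ds x).fun_pow 2)).fun_add ((diffAt_div (du2 x) (dQ x) hQne).fun_mul ((dp x).fun_pow 2))) (((dv2 x).const_mul (2 : ℝ)).fun_mul (dp x)),
    pd_add 0 ((dph x).fun_pow 2) (((((dps0 x).fun_pow 2).fun_add ((dps1 x).fun_pow 2)).fun_add ((dps2 x).fun_pow 2)).fun_add ((dps3 x).fun_pow 2)),
    pd_div 0 (((((du0 x).fun_mul (dv0 x)).fun_add ((du1 x).fun_mul (dv1 x))).fun_add ((du2 x).fun_mul (dv2 x))).fun_pow 2) ((dA x).fun_pow 2) (pow_ne_zero 2 hAne)]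
  rw [pd_div 1 (((((du0 x).fun_mul (dv0 x)).fun_add ((du1 x).fun_mul (dv1 x))).fun_add ((du2 x).fun_mul (dv2 x))).fun_pow 2) ((dA x).fun_pow 2) (pow_ne_zero 2 hAne),
    pd_div 2 (((((du0 x).fun_mul (dv0 x)).fun_add ((du1 x).fun_mul (dv1 x))).fun_add ((du2 x).fun_mul (dv2 x))).fun_pow 2) ((dA x).fun_pow 2) (pow_ne_zero 2 hAne),
    pd_div 3 (((((du0 x).fun_mul (dv0 x)).fun_add ((du1 x).fun_mul (dv1 x))).fun_add ((du2 x).fun_mul (dv2 x))).fun_pow 2) ((dA x).fun_pow 2) (pow_ne_zero 2 hAne),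
    pd_const_mul 0 (2 : ℝ) (diffAt_div ((((du0 x).fun_mul (dv0 x)).fun_add ((du1 x).fun_mul (dv1 x))).fun_add ((du2 x).fun_mul (dv2 x))) (dA x) hAne),
    pd_div 0 ((((du0 x).fun_mul (dv0 x)).fun_add ((du1 x).fun_mul (dv1 x))).fun_add ((du2 x).fun_mul (dv2 x))) (dA x) hAne,
    pd_add 0 ((((dps0 x).fun_pow 2).fun_add ((dps1 x).fun_pow 2)).fun_add ((dps2 x).fun_pow 2)) ((dps3 x).fun_pow 2)]
  rw [pd_sq 0 ((((du0 x).fun_mul (dv0 x)).fun_add ((du1 x).fun_mul (dv1 x))).fun_add ((du2 x).fun_mul (dv2 x))),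
    pd_sq 1 ((((du0 x).fun_mul (dv0 x)).fun_add ((du1 x).fun_mul (dv1 x))).fun_add ((du2 x).fun_mul (dv2 x))),
    pd_sq 2 ((((du0 x).fun_mul (dv0 x)).fun_add ((du1 x).fun_mul (dv1 x))).fun_add ((du2 x).fun_mul (dv2 x))),
    pd_sq 3 ((((du0 x).fun_mul (dv0 x)).fun_add ((du1 x).fun_mul (dv1 x))).fun_add ((du2 x).fun_mul (dv2 x))),
    pd_add 0 (((du0 x).fun_mul (dv0 x)).fun_add ((du1 x).fun_mul (dv1 x))) ((du2 x).fun_mul (dv2 x)),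
    pd_add 1 (((du0 x).fun_mul (dv0 x)).fun_add ((du1 x).fun_mul (dv1 x))) ((du2 x).fun_mul (dv2 x))]
  rw [pd_add 2 (((du0 x).fun_mul (dv0 x)).fun_add ((du1 x).fun_mul (dv1 x))) ((du2 x).fun_mul (dv2 x)),
    pd_add 3 (((du0 x).fun_mul (dv0 x)).fun_add ((du1 x).fun_mul (dv1 x))) ((du2 x).fun_mul (dv2 x)),
    pd_add 1 ((du0 x).fun_mul ((ds x).fun_pow 2)) ((diffAt_div (du0 x) (dQ x) hQne).fun_mul ((dp x).fun_pow 2)),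
    pd_add 2 ((du1 x).fun_mul ((ds x).fun_pow 2)) ((diffAt_div (du1 x) (dQ x) hQne).fun_mul ((dp x).fun_pow 2)),
    pd_add 3 ((du2 x).fun_mul ((ds x).fun_pow 2)) ((diffAt_div (du2 x) (dQ x) hQne).fun_mul ((dp x).fun_pow 2)),
    pd_add 0 ((dA x).fun_mul ((ds x).fun_pow 2)) ((diffAt_div (dA x) (dQ x) hQne).fun_mul ((dp x).fun_pow 2))]
  rw [pd_add 0 (((dps0 x).fun_pow 2).fun_add ((dps1 x).fun_pow 2)) ((dps2 x).fun_pow 2),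
    pd_add 0 (((dv0 x).fun_pow 2).fun_add ((dv1 x).fun_pow 2)) ((dv2 x).fun_pow 2),
    pd_add 1 (((dv0 x).fun_pow 2).fun_add ((dv1 x).fun_pow 2)) ((dv2 x).fun_pow 2),
    pd_add 2 (((dv0 x).fun_pow 2).fun_add ((dv1 x).fun_pow 2)) ((dv2 x).fun_pow 2),
    pd_add 3 (((dv0 x).fun_pow 2).fun_add ((dv1 x).fun_pow 2)) ((dv2 x).fun_pow 2),
    pd_add 0 ((du0 x).fun_mul (dv0 x)) ((du1 x).fun_mul (dv1 x))]
  rw [pd_add 1 ((du0 x).fun_mul (dv0 x)) ((du1 x).fun_mul (dv1 x)),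
    pd_add 2 ((du0 x).fun_mul (dv0 x)) ((du1 x).fun_mul (dv1 x)),
    pd_add 3 ((du0 x).fun_mul (dv0 x)) ((du1 x).fun_mul (dv1 x)),
    pd_mul 1 (diffAt_div (du0 x) (dQ x) hQne) ((dp x).fun_pow 2),
    pd_mul 2 (diffAt_div (du1 x) (dQ x) hQne) ((dp x).fun_pow 2),
    pd_mul 3 (diffAt_div (du2 x) (dQ x) hQne) ((dp x).fun_pow 2)]
  rw [pd_mul 0 (diffAt_div (dA x) (dQ x) hQne) ((dp x).fun_pow 2),
    pd_add 0 ((dps0 x).fun_pow 2) ((dps1 x).fun_pow 2),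
    pd_add 0 ((dv0 x).fun_pow 2) ((dv1 x).fun_pow 2),
    pd_add 1 ((dv0 x).fun_pow 2) ((dv1 x).fun_pow 2),
    pd_add 2 ((dv0 x).fun_pow 2) ((dv1 x).fun_pow 2),
    pd_add 3 ((dv0 x).fun_pow 2) ((dv1 x).fun_pow 2)]
  rw [pd_mul 1 ((dRq x).fun_add (dPw x)) (du0 x),
    pd_mul 2 ((dRq x).fun_add (dPw x)) (du1 x),
    pd_mul 3 ((dRq x).fun_add (dPw x)) (du2 x),
    pd_mul 0 ((dRq x).fun_add (dPw x)) (dA x),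
    pd_mul 1 (dps0 x) (dps1 x),
    pd_mul 2 (dps0 x) (dps2 x)]
  rw [pd_mul 3 (dps0 x) (dps3 x),
    pd_mul 1 ((dv0 x).const_mul (2 : ℝ)) (dp x),
    pd_mul 2 ((dv1 x).const_mul (2 : ℝ)) (dp x),
    pd_mul 3 ((dv2 x).const_mul (2 : ℝ)) (dp x),
    pd_mul 1 (du0 x) ((ds x).fun_pow 2),
    pd_mul 2 (du1 x) ((ds x).fun_pow 2)]
  rw [pd_mul 3 (du2 x) ((ds x).fun_pow 2),
    pd_mul 0 (dA x) ((ds x).fun_pow 2),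
    pd_div 1 (du0 x) (dQ x) hQne,
    pd_div 2 (du1 x) (dQ x) hQne,
    pd_div 3 (du2 x) (dQ x) hQne,
    pd_mul 0 (du2 x) (dv2 x)]
  rw [pd_mul 1 (du2 x) (dv2 x),
    pd_mul 2 (du2 x) (dv2 x),
    pd_mul 3 (du2 x) (dv2 x),
    pd_mul 0 (du0 x) (dv0 x),
    pd_mul 0 (du1 x) (dv1 x),
    pd_mul 1 (du0 x) (dv0 x)]
  rw [pd_mul 1 (du1 x) (dv1 x),
    pd_mul 2 (du0 x) (dv0 x),
    pd_mul 2 (du1 x) (dv1 x),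
    pd_mul 3 (du0 x) (dv0 x),
    pd_mul 3 (du1 x) (dv1 x),
    pd_div 0 (dA x) (dQ x) hQne]
  rw [pd_div 0 (du0 x) (dA x) hAne,
    pd_div 0 (du1 x) (dA x) hAne,
    pd_div 0 (du2 x) (dA x) hAne,
    pd_div 1 (du0 x) (dA x) hAne,
    pd_div 1 (du1 x) (dA x) hAne,
    pd_div 1 (du2 x) (dA x) hAne]
  rw [pd_div 2 (du0 x) (dA x) hAne,
    pd_div 2 (du1 x) (dA x) hAne,
    pd_div 2 (du2 x) (dA x) hAne,
    pd_div 3 (du0 x) (dA x) hAne,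
    pd_div 3 (du1 x) (dA x) hAne,
    pd_div 3 (du2 x) (dA x) hAne]
  rw [pd_add 0 (dRq x) (dPw x),
    pd_add 1 (dRq x) (dPw x),
    pd_add 2 (dRq x) (dPw x),
    pd_add 3 (dRq x) (dPw x),
    pd_sq 0 (dps3 x),
    pd_sq 0 (dps2 x)]
  rw [pd_sq 0 (dps0 x),
    pd_sq 0 (dps1 x),
    pd_sq 0 (dph x),
    pd_sq 0 (dv2 x),
    pd_sq 1 (dv2 x),
    pd_sq 2 (dv2 x)]
  rw [pd_sq 3 (dv2 x),
    pd_sq 0 (dv0 x),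
    pd_sq 0 (dv1 x),
    pd_sq 1 (dv0 x),
    pd_sq 1 (dv1 x),
    pd_sq 2 (dv0 x)]
  rw [pd_sq 2 (dv1 x),
    pd_sq 3 (dv0 x),
    pd_sq 3 (dv1 x),
    pd_const_mul 1 (2 : ℝ) (dv0 x),
    pd_const_mul 2 (2 : ℝ) (dv1 x),
    pd_const_mul 3 (2 : ℝ) (dv2 x)]
  rw [pd_sq 0 (ds x),
    pd_sq 0 (dp x),
    pd_sq 1 (ds x),
    pd_sq 1 (dp x),
    pd_sq 2 (ds x),
    pd_sq 2 (dp x)]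
  rw [pd_sq 3 (ds x),
    pd_sq 3 (dp x),
    pd_sq 0 (dA x),
    pd_sq 1 (dA x),
    pd_sq 2 (dA x),
    pd_sq 3 (dA x)]
  simp only [hdU0]
  have heS := hsol.eS x (Set.mem_univ x)
  have heP := hsol.eP x (Set.mem_univ x)
  have heU0 := hsol.eU x (Set.mem_univ x) 0
  have heU1 := hsol.eU x (Set.mem_univ x) 1
  have heU2 := hsol.eU x (Set.mem_univ x) 2
  have heL0 := hsol.eL0 x (Set.mem_univ x)
  have heLj0 := hsol.eLj x (Set.mem_univ x) 0
  have heLj1 := hsol.eLj x (Set.mem_univ x) 1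
  have heLj2 := hsol.eLj x (Set.mem_univ x) 2
  have heL4 := hsol.eL4 x (Set.mem_univ x)
  simp only [Fin.sum_univ_four, Fin.sum_univ_three, Piq, gInv, U4_zero, U4_one, U4_two,
    U4_three, fs0, fs1, fs2, Fin.reduceEq, reduceIte, if_true, if_false, mul_zero, add_zero,
    mul_one, zero_add] at heS heP heU0 heU1 heU2 heL0 heLj0 heLj1 heLj2 heL4
  linear_combination (norm := (field_simp; ring1))
    (-2 * (Uc (W x) 0 * Uc (Vd x) 0 + Uc (W x) 1 * Uc (Vd x) 1 + Uc (W x) 2 * Uc (Vd x) 2) * (U0 (W x) * pd 0 (fun y => Pc (Vd y)) x + Uc (W x) 0 * pd 1 (fun y => Pc (Vd y)) x + Uc (W x) 1 * pd 2 (fun y => Pc (Vd y)) x + Uc (W x) 2 * pd 3 (fun y => Pc (Vd y)) x) / U0 (W x) ^ 2) * ha2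
    + (2 * Sc (Vd x)) * heS
    + (2 * Pc (Vd x) / Qq R S (W x)) * heP
    + (2 * Uc (Vd x) 0 - 2 * (Uc (W x) 0 * Uc (Vd x) 0 + Uc (W x) 1 * Uc (Vd x) 1 + Uc (W x) 2 * Uc (Vd x) 2) * Uc (W x) 0 / U0 (W x) ^ 2) * heU0
    + (2 * Uc (Vd x) 1 - 2 * (Uc (W x) 0 * Uc (Vd x) 0 + Uc (W x) 1 * Uc (Vd x) 1 + Uc (W x) 2 * Uc (Vd x) 2) * Uc (W x) 1 / U0 (W x) ^ 2) * heU1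
    + (2 * Uc (Vd x) 2 - 2 * (Uc (W x) 0 * Uc (Vd x) 0 + Uc (W x) 1 * Uc (Vd x) 1 + Uc (W x) 2 * Uc (Vd x) 2) * Uc (W x) 2 / U0 (W x) ^ 2) * heU2
    + (-Psic (Vd x) 0) * heL0
    + Psic (Vd x) 1 * heLj0 + Psic (Vd x) 2 * heLj1 + Psic (Vd x) 3 * heLj2
    + Phic (Vd x) * heL4
end EN
end
end
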